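/- arXiv:1611.01305 — 6 statements merged into one kernel-verified Lean document; each statement's English description precedes it below -/
import Mathlib

section
/- Let W be a conference matrix of order n with n ≥ 2, and let k be an odd positive integer such that k² ≤ n−1 < (k+2)². Then the excess satisfies E(W) ≤ n(k² + 2k + n − 1)/(2(k+1)) (an inequality of rational numbers). Moreover, equality holds if and only if either (i) n−1 is a perfect square and W·1_n = k·1_n, or (ii) n−1 is not a perfect square and every entry of W·1_n lies in {k, k+2} (and both values occur). -/
/-!
Write `r i` for the row sums of `W`. Modulo 2, `W` is `J - I`, so two distinct rows have inner
product `n - 2 ≡ n`; orthogonality makes `n` even, and then every `r i ≡ n - 1` is odd.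
From `Wᵀ W = (n - 1) I` one gets `∑ r i ^ 2 = n (n - 1)`. Since no odd integer lies strictly
between the odd numbers `k` and `k + 2`, every term of `∑ (r i - k) (r i - k - 2)` is
nonnegative; expanding the sum gives the bound, with equality iff every `r i ∈ {k, k + 2}`.
Which of the two values occur is then read off from `∑ r i ^ 2 = n (n - 1)`: all `r i = k`
forces `n - 1 = k ^ 2`, all `r i = k + 2` forces `n - 1 = (k + 2) ^ 2`, and the only odd square
in `[k ^ 2, (k + 2) ^ 2)` is `k ^ 2`.
-/

open Finset

namespace Matrix

variable {ι : Type*} [DecidableEq ι]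

theorem intCast_apply_zmod_two {A : Matrix ι ι ℤ} (hdiag : ∀ i, A i i = 0)
    (hoff : ∀ i j, i ≠ j → A i j = 1 ∨ A i j = -1) (i j : ι) :
    (A i j : ZMod 2) = 1 - if i = j then 1 else 0 := by
  split_ifs with h
  · simp [h, hdiag]
  · rcases hoff i j h with h' | h' <;> simp [h']

variable [Fintype ι]

theorem transpose_mul_self_eq_smul_one {R : Type*} [CommRing R] {A : Matrix ι ι R} {c : R}
    (hc : IsRegular c) (h : A * Aᵀ = c • 1) : Aᵀ * A = c • 1 := by
  have hdet : IsRegular (A.det * Aᵀ.det) := by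
    rw [← det_mul, h, det_smul, det_one, mul_one]
    exact hc.pow _
  refine (isRegular_of_isLeftRegular_det hdet.of_mul_left.left).left ?_
  change A * (Aᵀ * A) = A * (c • 1)
  rw [← mul_assoc, h, smul_mul_assoc, one_mul, mul_smul_comm, mul_one]

theorem sum_sq_sum_row_of_transpose_mul_self {R : Type*} [CommRing R] {A : Matrix ι ι R} {c : R}
    (h : Aᵀ * A = c • 1) : ∑ i, (∑ j, A i j) ^ 2 = Fintype.card ι * c := by
  have : (A *ᵥ 1) ⬝ᵥ (A *ᵥ 1) = ((Aᵀ * A) *ᵥ 1) ⬝ᵥ 1 := by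
    rw [dotProduct_mulVec, ← mulVec_transpose, mulVec_mulVec]
  rw [h, smul_mulVec, one_mulVec] at this
  simpa [dotProduct, mulVec, sq, mul_comm] using this

variable {A : Matrix ι ι ℤ}

theorem even_card_of_mul_transpose_apply_eq_zero (hdiag : ∀ i, A i i = 0)
    (hoff : ∀ i j, i ≠ j → A i j = 1 ∨ A i j = -1) {i j : ι} (hij : i ≠ j)
    (h : (A * Aᵀ) i j = 0) : Even (Fintype.card ι) := by
  have hcard : (Fintype.card ι : ZMod 2) - 1 - 1 = 0 := by
    simpa [mul_apply, intCast_apply_zmod_two hdiag hoff, mul_sub, sum_sub_distrib, hij] using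
      congrArg (Int.cast : ℤ → ZMod 2) h
  rw [← ZMod.natCast_eq_zero_iff_even]
  grind

theorem odd_sum_row (hdiag : ∀ i, A i i = 0)
    (hoff : ∀ i j, i ≠ j → A i j = 1 ∨ A i j = -1) (hι : Even (Fintype.card ι)) (i : ι) :
    Odd (∑ j, A i j) := by
  rw [← ZMod.intCast_eq_one_iff_odd]
  simp [intCast_apply_zmod_two hdiag hoff, sum_sub_distrib, ZMod.natCast_eq_zero_iff_even.mpr hι]

end Matrix

theorem Int.sub_mul_sub_add_two_nonneg_of_odd {r K : ℤ} (hr : Odd r) (hK : Odd K) :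
    0 ≤ (r - K) * (r - (K + 2)) := by
  obtain ⟨m, hm⟩ := (hr.sub_odd hK).two_dvd
  rw [show r - (K + 2) = r - K - 2 by ring, hm]
  nlinarith [Int.le_self_sq m]

theorem Nat.isSquare_iff_eq_sq_of_odd {N k : ℕ} (hN : Odd N) (hk : Odd k) (hk1 : k ^ 2 ≤ N)
    (hk2 : N < (k + 2) ^ 2) : IsSquare N ↔ N = k ^ 2 := by
  refine ⟨fun ⟨m, hm⟩ => ?_, fun h => ⟨k, h.trans (sq k)⟩⟩
  subst hm
  have hm : Odd m := (Nat.odd_mul.mp hN).1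
  rw [← sq] at hk1 hk2 ⊢
  have h1 : k ≤ m := (Nat.pow_le_pow_iff_left two_ne_zero).mp hk1
  have h2 : m < k + 2 := (Nat.pow_lt_pow_iff_left two_ne_zero).mp hk2
  obtain ⟨a, rfl⟩ := hm
  obtain ⟨b, rfl⟩ := hk
  congr 1
  omega

section RowSums

variable {ι : Type*} [Fintype ι] {r : ι → ℤ}

theorem sum_sub_mul_sub_add_two (r : ι → ℤ) (K : ℤ) :
    ∑ i, (r i - K) * (r i - (K + 2)) =
      ∑ i, r i ^ 2 - 2 * (K + 1) * ∑ i, r i + Fintype.card ι * (K * (K + 2)) := by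
  have (i : ι) : (r i - K) * (r i - (K + 2)) = r i ^ 2 - 2 * (K + 1) * r i + K * (K + 2) := by
    ring
  simp only [this, sum_add_distrib, sum_sub_distrib, ← mul_sum, sum_const, card_univ, nsmul_eq_mul]
  ring

theorem two_mul_add_one_mul_sum_le_of_odd {K : ℤ} (hr : ∀ i, Odd (r i)) (hK : Odd K) :
    2 * (K + 1) * ∑ i, r i ≤ ∑ i, r i ^ 2 + Fintype.card ι * (K * (K + 2)) := by
  have := sum_nonneg fun i (_ : i ∈ univ) => Int.sub_mul_sub_add_two_nonneg_of_odd (hr i) hK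
  rw [sum_sub_mul_sub_add_two] at this
  linarith

theorem two_mul_add_one_mul_sum_eq_iff_of_odd {K : ℤ} (hr : ∀ i, Odd (r i)) (hK : Odd K) :
    2 * (K + 1) * ∑ i, r i = ∑ i, r i ^ 2 + Fintype.card ι * (K * (K + 2)) ↔
      ∀ i, r i = K ∨ r i = K + 2 := by
  have hzero := sum_eq_zero_iff_of_nonneg fun i (_ : i ∈ univ) =>
    Int.sub_mul_sub_add_two_nonneg_of_odd (hr i) hK
  rw [sum_sub_mul_sub_add_two] at hzero
  simp only [mem_univ, true_imp_iff, mul_eq_zero, sub_eq_zero] at hzero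
  rw [← hzero]
  constructor <;> intro h <;> linarith

theorem sub_one_eq_sq_of_forall_eq [Nonempty ι] {c : ℤ}
    (hsq : ∑ i, r i ^ 2 = Fintype.card ι * (Fintype.card ι - 1)) (h : ∀ i, r i = c) :
    (Fintype.card ι : ℤ) - 1 = c ^ 2 := by
  simp only [h, sum_const, card_univ, nsmul_eq_mul] at hsq
  exact (mul_left_cancel₀ (by positivity) hsq).symm

theorem eq_of_sum_sq_eq_card_mul_sq {K : ℤ} (hK : 0 ≤ K) (h : ∀ i, r i = K ∨ r i = K + 2)
    (hsq : ∑ i, r i ^ 2 = Fintype.card ι * K ^ 2) (i : ι) : r i = K := by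
  have hle (i : ι) : K ^ 2 ≤ r i ^ 2 := pow_le_pow_left₀ hK (by rcases h i with h | h <;> omega) 2
  have hsum : ∑ _i : ι, K ^ 2 = ∑ i, r i ^ 2 := by simp [hsq]
  have := (sum_eq_sum_iff_of_le fun i _ => hle i).mp hsum i (mem_univ i)
  rcases h i with h | h
  · exact h
  · rw [h] at this; nlinarith

theorem forall_eq_or_eq_add_two_iff {k : ℕ} (hk : Odd k) (hN : Even (Fintype.card ι))
    (hsq : ∑ i, r i ^ 2 = Fintype.card ι * (Fintype.card ι - 1))
    (hk1 : k ^ 2 ≤ Fintype.card ι - 1) (hk2 : Fintype.card ι - 1 < (k + 2) ^ 2) :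
    (∀ i, r i = k ∨ r i = k + 2) ↔
      (IsSquare (Fintype.card ι - 1) ∧ ∀ i, r i = k) ∨
        (¬ IsSquare (Fintype.card ι - 1) ∧ (∀ i, r i = k ∨ r i = k + 2) ∧
          (∃ i, r i = k) ∧ ∃ i, r i = k + 2) := by
  set N := Fintype.card ι
  have hN2 : 2 ≤ N := by have := pow_pos hk.pos 2; omega
  have : Nonempty ι := Fintype.card_pos_iff.mp (by omega)
  have hcast : ((N - 1 : ℕ) : ℤ) = N - 1 := by omega
  have hsquare := Nat.isSquare_iff_eq_sq_of_odd (Nat.Even.sub_odd (by omega) hN odd_one) hk hk1 hk2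
  refine ⟨fun h => ?_, ?_⟩
  · by_cases hs : IsSquare (N - 1)
    · refine .inl ⟨hs, eq_of_sum_sq_eq_card_mul_sq (by positivity) h ?_⟩
      rw [hsq, ← hcast, hsquare.mp hs, Nat.cast_pow]
    · refine .inr ⟨hs, h, ?_, ?_⟩
      · by_contra! hno
        have := sub_one_eq_sq_of_forall_eq hsq fun i => (h i).resolve_left (hno i)
        rw [← hcast] at this
        exact hk2.ne (by exact_mod_cast this)
      · by_contra! hno
        have := sub_one_eq_sq_of_forall_eq hsq fun i => (h i).resolve_right (hno i)
        rw [← hcast] at this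
        exact hs (hsquare.mpr (by exact_mod_cast this))
  · rintro (⟨-, h⟩ | ⟨-, h, -⟩)
    · exact fun i => .inl (h i)
    · exact h

end RowSums

theorem stmt_0_general (n : ℕ) (W : Matrix (Fin n) (Fin n) ℤ)
    (hdiag : ∀ i, W i i = 0)
    (hoff : ∀ i j, i ≠ j → W i j = 1 ∨ W i j = -1)
    (horth : W * W.transpose = ((n : ℤ) - 1) • 1)
    (k : ℕ) (hkodd : Odd k)
    (hk1 : k ^ 2 ≤ n - 1) (hk2 : n - 1 < (k + 2) ^ 2) :
    ((∑ i, ∑ j, W i j : ℤ) : ℚ) ≤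
        (n : ℚ) * ((k : ℚ) ^ 2 + 2 * k + n - 1) / (2 * ((k : ℚ) + 1)) ∧
      (((∑ i, ∑ j, W i j : ℤ) : ℚ) =
          (n : ℚ) * ((k : ℚ) ^ 2 + 2 * k + n - 1) / (2 * ((k : ℚ) + 1)) ↔
        (IsSquare (n - 1) ∧ ∀ i, ∑ j, W i j = (k : ℤ)) ∨
        (¬ IsSquare (n - 1) ∧
          (∀ i, ∑ j, W i j = (k : ℤ) ∨ ∑ j, W i j = (k : ℤ) + 2) ∧
          (∃ i, ∑ j, W i j = (k : ℤ)) ∧ (∃ i, ∑ j, W i j = (k : ℤ) + 2))) := by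
  have hn : 2 ≤ n := by have := pow_pos hkodd.pos 2; omega
  have hsq : ∑ i, (∑ j, W i j) ^ 2 = (n : ℤ) * (n - 1) := by
    simpa using Matrix.sum_sq_sum_row_of_transpose_mul_self
      (Matrix.transpose_mul_self_eq_smul_one (IsRegular.of_ne_zero (by omega)) horth)
  have heven : Even n := by
    simpa using Matrix.even_card_of_mul_transpose_apply_eq_zero hdiag hoff
      (i := ⟨0, by omega⟩) (j := ⟨1, by omega⟩) (by simp) (by simp [horth])
  have hodd := Matrix.odd_sum_row hdiag hoff (by simpa using heven)
  have hK : Odd (k : ℤ) := by exact_mod_cast hkodd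
  have hle := two_mul_add_one_mul_sum_le_of_odd hodd hK
  have heq := two_mul_add_one_mul_sum_eq_iff_of_odd hodd hK
  rw [hsq, Fintype.card_fin] at hle heq
  have hden : (0 : ℚ) < 2 * (k + 1) := by positivity
  refine ⟨?_, ?_⟩
  · rw [le_div_iff₀ hden]
    have := (Int.cast_le (R := ℚ)).mpr hle
    push_cast at this ⊢
    linarith
  · have hcases := forall_eq_or_eq_add_two_iff (r := fun i => ∑ j, W i j) hkodd
      (by simpa using heven) (by simpa using hsq) (by simpa using hk1) (by simpa using hk2)
    rw [Fintype.card_fin] at hcases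
    rw [eq_div_iff hden.ne', ← hcases, ← heq, ← Int.cast_inj (α := ℚ)]
    push_cast
    constructor <;> intro h <;> linarith

/-- Let `W` be a conference matrix of order `n ≥ 2` and `k` an odd
positive integer with `k² ≤ n − 1 < (k+2)²`.  Then the excess satisfies
`E(W) ≤ n(k² + 2k + n − 1)/(2(k+1))`, with equality iff either `n − 1` is a
perfect square and all row sums equal `k`, or `n − 1` is not a perfect square
and every row sum lies in `{k, k+2}` with both values occurring. -/
theorem stmt_0 (n : ℕ) (hn : 2 ≤ n) (W : Matrix (Fin n) (Fin n) ℤ)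
    (hdiag : ∀ i, W i i = 0)
    (hoff : ∀ i j, i ≠ j → W i j = 1 ∨ W i j = -1)
    (horth : W * W.transpose = ((n : ℤ) - 1) • 1)
    (k : ℕ) (hkodd : Odd k) (hkpos : 0 < k)
    (hk1 : k ^ 2 ≤ n - 1) (hk2 : n - 1 < (k + 2) ^ 2) :
    ((∑ i, ∑ j, W i j : ℤ) : ℚ) ≤
        (n : ℚ) * ((k : ℚ) ^ 2 + 2 * k + n - 1) / (2 * ((k : ℚ) + 1)) ∧
      (((∑ i, ∑ j, W i j : ℤ) : ℚ) =
          (n : ℚ) * ((k : ℚ) ^ 2 + 2 * k + n - 1) / (2 * ((k : ℚ) + 1)) ↔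
        (IsSquare (n - 1) ∧ ∀ i, ∑ j, W i j = (k : ℤ)) ∨
        (¬ IsSquare (n - 1) ∧
          (∀ i, ∑ j, W i j = (k : ℤ) ∨ ∑ j, W i j = (k : ℤ) + 2) ∧
          (∃ i, ∑ j, W i j = (k : ℤ)) ∧ (∃ i, ∑ j, W i j = (k : ℤ) + 2))) :=
  stmt_0_general n W hdiag hoff horth k hkodd hk1 hk2
end

section
/- Let (P,(B_i)_{i∈I}) be a 2-(v,k,λ) design with b blocks and replication number r, and let D be a two-intersection set with parameters (j;α,β) for it, where α ≠ β. Then for every point p ∈ P, the number of blocks B_i with p ∈ B_i and |B_i ∩ D| = α equals (λj − βr)/(α−β) if p ∉ D, and equals (λ(j−1) + r − βr)/(α−β) if p ∈ D; i.e., the set {i ∈ I : |B_i ∩ D| = α} is a two-intersection set with parameters (j^⊥; α^⊥, β^⊥) for the dual design, where j^⊥ = (rj − βb)/(α−β), α^⊥ = (λj − βr)/(α−β), β^⊥ = (λ(j−1) + r − βr)/(α−β). -/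
lemma key_count {I : Type*} (F : Finset I) (f : I → ℕ) (α β : ℕ)
    (hf : ∀ i ∈ F, f i = α ∨ f i = β) (hαβ : (α : ℚ) - β ≠ 0) :
    ((F.filter (fun i => f i = α)).card : ℚ)
      = (((∑ i ∈ F, f i : ℕ) : ℚ) - (β : ℚ) * F.card) / ((α : ℚ) - β) := by
  classical
  set x := (F.filter (fun i => f i = α)).card with hx
  set y := (F.filter (fun i => ¬ f i = α)).card with hy
  have hxy : x + y = F.card := Finset.card_filter_add_card_filter_not _
  have hsum : ∑ i ∈ F, f i = α * x + β * y := by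
    rw [← Finset.sum_filter_add_sum_filter_not F (fun i => f i = α)]
    congr 1
    · rw [Finset.sum_congr rfl (fun i hi => (Finset.mem_filter.mp hi).2),
        Finset.sum_const, smul_eq_mul, mul_comm]
    · rw [Finset.sum_congr rfl (fun i hi => ?_), Finset.sum_const, smul_eq_mul, mul_comm]
      have h := Finset.mem_filter.mp hi
      rcases hf i h.1 with h' | h'
      · exact absurd h' h.2
      · exact h'
  have hsumQ : ((∑ i ∈ F, f i : ℕ) : ℚ) = α * x + β * y := by exact_mod_cast hsum
  have hxyQ : (x : ℚ) + y = F.card := by exact_mod_cast hxy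
  rw [eq_div_iff hαβ]
  linear_combination -hsumQ - (β : ℚ) * hxyQ

lemma double_count {P I : Type*} [DecidableEq P] (B : I → Finset P) (D : Finset P)
    (F : Finset I) [DecidableEq I] :
    ∑ i ∈ F, (B i ∩ D).card = ∑ d ∈ D, (F.filter (fun i => d ∈ B i)).card := by
  simp only [Finset.card_filter]
  rw [Finset.sum_comm]
  refine Finset.sum_congr rfl fun i _ => ?_
  rw [Finset.inter_comm, ← Finset.filter_mem_eq_inter, Finset.card_filter]

/-- In a `2-(v,k,λ)` design with `b` blocks and replication
number `r`, if `D` is a two-intersection set with parameters `(j; α, β)`, then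
for each point `p`, the number of blocks through `p` meeting `D` in `α` points
is `(λj − βr)/(α−β)` if `p ∉ D` and `(λ(j−1) + r − βr)/(α−β)` if `p ∈ D`;
i.e. the dual `{i : |Bᵢ ∩ D| = α}` is a two-intersection set with parameters
`(j^⊥; α^⊥, β^⊥)` for the dual design, where `j^⊥ = (rj − βb)/(α−β)`. -/
theorem stmt_3 {P I : Type*} [Fintype P] [Fintype I] [DecidableEq P]
    (B : I → Finset P) (v b k r lam : ℕ)
    (hv : Fintype.card P = v) (hb : Fintype.card I = b)
    (hk : ∀ i, (B i).card = k)
    (hr : ∀ p : P, (Finset.univ.filter (fun i => p ∈ B i)).card = r)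
    (hlam : ∀ p p' : P, p ≠ p' →
      (Finset.univ.filter (fun i => p ∈ B i ∧ p' ∈ B i)).card = lam)
    (D : Finset P) (j α β : ℕ) (hj : D.card = j) (hαβ : α ≠ β)
    (hint : Finset.univ.image (fun i => (B i ∩ D).card) = ({α, β} : Finset ℕ)) :
    (∀ p : P,
      ((Finset.univ.filter (fun i => p ∈ B i ∧ (B i ∩ D).card = α)).card : ℚ)
        = if p ∈ D then ((lam : ℚ) * ((j : ℚ) - 1) + r - (β : ℚ) * r) / ((α : ℚ) - β)
          else ((lam : ℚ) * j - (β : ℚ) * r) / ((α : ℚ) - β)) ∧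
    ((Finset.univ.filter (fun i => (B i ∩ D).card = α)).card : ℚ)
        = ((r : ℚ) * j - (β : ℚ) * b) / ((α : ℚ) - β) := by
  classical
  have hαβQ : (α : ℚ) - β ≠ 0 := sub_ne_zero.mpr (by exact_mod_cast hαβ)
  have hab : ∀ i : I, (B i ∩ D).card = α ∨ (B i ∩ D).card = β := by
    intro i
    have h : (B i ∩ D).card ∈ Finset.univ.image (fun i => (B i ∩ D).card) :=
      Finset.mem_image_of_mem _ (Finset.mem_univ i)
    rw [hint] at h
    simpa using h
  constructor
  · intro p
    set F := Finset.univ.filter (fun i => p ∈ B i) with hF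
    have hFcard : F.card = r := hr p
    have hfilter : Finset.univ.filter (fun i => p ∈ B i ∧ (B i ∩ D).card = α)
        = F.filter (fun i => (B i ∩ D).card = α) := by
      rw [hF, Finset.filter_filter]
    have hkey := key_count F (fun i => (B i ∩ D).card) α β (fun i _ => hab i) hαβQ
    rw [hfilter, hkey, hFcard, double_count]
    have hff : ∀ d : P, F.filter (fun i => d ∈ B i)
        = Finset.univ.filter (fun i => p ∈ B i ∧ d ∈ B i) := by
      intro d; rw [hF, Finset.filter_filter]
    by_cases hp : p ∈ D
    · simp only [hp, if_true]
      have hj1 : 1 ≤ j := hj ▸ Finset.card_pos.mpr ⟨p, hp⟩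
      have hSval : ∑ d ∈ D, (F.filter (fun i => d ∈ B i)).card = r + lam * (j - 1) := by
        rw [← Finset.add_sum_erase _ _ hp]
        congr 1
        · rw [hff p]
          have : Finset.univ.filter (fun i => p ∈ B i ∧ p ∈ B i)
              = Finset.univ.filter (fun i => p ∈ B i) := by
            simp only [and_self]
          rw [this]; exact hr p
        · rw [Finset.sum_congr rfl (fun d hd => ?_), Finset.sum_const, smul_eq_mul,
            Finset.card_erase_of_mem hp, hj, mul_comm]
          rw [hff d]
          exact hlam p d (Ne.symm (Finset.ne_of_mem_erase hd))
      rw [hSval]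
      congr 1
      push_cast [Nat.cast_sub hj1]
      ring
    · simp only [hp, if_false]
      have hSval : ∑ d ∈ D, (F.filter (fun i => d ∈ B i)).card = j * lam := by
        rw [Finset.sum_congr rfl (fun d hd => ?_), Finset.sum_const, smul_eq_mul, hj]
        rw [hff d]
        exact hlam p d (fun h => hp (h ▸ hd))
      rw [hSval]
      congr 1
      push_cast
      ring
  · have hkey := key_count Finset.univ (fun i => (B i ∩ D).card) α β (fun i _ => hab i) hαβQ
    rw [hkey, double_count]
    have hSval : ∑ d ∈ D, (Finset.univ.filter (fun i => d ∈ B i)).card = j * r := by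
      rw [Finset.sum_congr rfl (fun d _ => hr d), Finset.sum_const, smul_eq_mul, hj]
    rw [hSval, Finset.card_univ, hb]
    congr 1
    push_cast
    ring
end

section
/- With the notation of the context, the character sum identity ∑_{x ∈ F_q} χ₄(1 + ω^ℓ·x) = χ₄'(n)³ · χ₄'(n − t²/4)³ · J(η, χ₄') holds. -/
/-!
Since `F_{q²}/F_q` is quadratic, `N(z) = z^(q+1)`, and `χ₄ = χ₄' ∘ N` because both sides agree on
the generator `ω`. For `x ∈ F_q` one has `N(1 + ω^ℓ x) = 1 + t x + n x²`, so the sum is a character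
sum of a quadratic polynomial over `F_q`. Completing the square and counting square roots with the
quadratic character `η = χ₄'²` turns `∑ χ₄'(y² + d)` into `η(-d) χ₄'(d) J(η, χ₄')` with
`d = (n - t²/4)/n²`. Finally `n - t²/4` is a nonsquare, since otherwise (as `-1` is a square)
`X² - tX + n`, whose roots are `ω^ℓ, ω^(ℓq)`, would have a root in `F_q`, forcing `q + 1 ∣ ℓ`;
hence `η(-d) = -1` and `χ₄'(n - t²/4)² = -1`, which gives the stated constant.
-/

open Finset

namespace FiniteField

variable {K L : Type*} [Field K] [Field L] [Fintype K] [Fintype L] [Algebra K L]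

theorem finrank_eq_two_of_card_eq_sq (hL : Fintype.card L = Fintype.card K ^ 2) :
    Module.finrank K L = 2 :=
  Nat.pow_right_injective (Fintype.one_lt_card (α := K)) <| by
    simp only [← Module.card_eq_pow_finrank, hL]

theorem algebraMap_norm_eq_pow_card_add_one (hL : Fintype.card L = Fintype.card K ^ 2) (z : L) :
    algebraMap K L (Algebra.norm K z) = z ^ (Fintype.card K + 1) := by
  rw [algebraMap_norm_eq_pow_sum, finrank_eq_two_of_card_eq_sq hL, Nat.card_eq_fintype_card]
  simp [sum_range_succ, add_comm]

theorem algebraMap_trace_eq_add_pow_card (hL : Fintype.card L = Fintype.card K ^ 2) (z : L) :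
    algebraMap K L (Algebra.trace K L z) = z + z ^ Fintype.card K := by
  rw [algebraMap_trace_eq_sum_pow, finrank_eq_two_of_card_eq_sq hL, Nat.card_eq_fintype_card]
  simp [sum_range_succ]

omit [Fintype L] in
theorem algebraMap_pow_card (x : K) :
    algebraMap K L x ^ Fintype.card K = algebraMap K L x := by
  rw [← map_pow, pow_card]

theorem norm_one_add_mul_algebraMap (hL : Fintype.card L = Fintype.card K ^ 2) (z : L) (x : K) :
    Algebra.norm K (1 + z * algebraMap K L x)
      = 1 + Algebra.trace K L z * x + Algebra.norm K z * x ^ 2 := by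
  apply (algebraMap K L).injective
  have hfrob : (1 + z * algebraMap K L x) ^ Fintype.card K
      = 1 + z ^ Fintype.card K * algebraMap K L x := by
    have := (frobeniusAlgEquivOfAlgebraic K L).map_add 1 (z * algebraMap K L x)
    simpa [coe_frobeniusAlgEquivOfAlgebraic, mul_pow, algebraMap_pow_card] using this
  simp only [map_add, map_mul, map_one, map_pow, algebraMap_norm_eq_pow_card_add_one hL,
    algebraMap_trace_eq_add_pow_card hL, pow_succ, hfrob]
  ring

theorem not_isSquare_norm_sub_trace_sq_div_four (hL : Fintype.card L = Fintype.card K ^ 2)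
    (hK : ringChar K ≠ 2) (hK₄ : IsSquare (-1 : K)) {a : L}
    (ha : a ∉ Set.range (algebraMap K L)) :
    ¬ IsSquare (Algebra.norm K a - Algebra.trace K L a ^ 2 / 4) := by
  have h2 : (2 : K) ≠ 0 := Ring.two_ne_zero hK
  have : NeZero (2 : K) := ⟨h2⟩
  rintro ⟨s, hs⟩
  obtain ⟨i, hi⟩ := hK₄
  obtain ⟨r, hr⟩ : ∃ r : K, 1 * (r * r) + (-Algebra.trace K L a) * r + Algebra.norm K a = 0 :=
    exists_quadratic_eq_zero one_ne_zero ⟨2 * i * s, by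
      have h4 : Algebra.trace K L a ^ 2 / 4 * 4 = Algebra.trace K L a ^ 2 :=
        div_mul_cancel₀ _ (by rw [show (4 : K) = 2 * 2 by norm_num]; exact mul_ne_zero h2 h2)
      rw [discrim]
      linear_combination -4 * hs - h4 + 4 * s ^ 2 * hi⟩
  have hroots : (algebraMap K L r - a) * (algebraMap K L r - a ^ Fintype.card K) = 0 := by
    have := congrArg (algebraMap K L) hr
    simp only [map_add, map_mul, map_neg, map_one, map_zero,
      algebraMap_norm_eq_pow_card_add_one hL, algebraMap_trace_eq_add_pow_card hL] at this
    linear_combination this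
  rcases mul_eq_zero.mp hroots with h | h
  · exact ha ⟨r, by linear_combination h⟩
  · refine ha ⟨Algebra.trace K L a - r, ?_⟩
    rw [map_sub, algebraMap_trace_eq_add_pow_card hL]
    linear_combination -h

omit [Fintype K] [Algebra K L] in
theorem exists_pow_eq_of_isPrimitiveRoot {ω : L} (hω : IsPrimitiveRoot ω (Fintype.card L - 1))
    {z : L} (hz : z ≠ 0) : ∃ k : ℕ, ω ^ k = z :=
  have : NeZero (Fintype.card L - 1) := ⟨(Nat.sub_pos_of_lt Fintype.one_lt_card).ne'⟩
  let ⟨k, _, hk⟩ := hω.eq_pow_of_pow_eq_one (pow_card_sub_one_eq_one z hz)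
  ⟨k, hk⟩

theorem zpow_notMem_range_algebraMap (hL : Fintype.card L = Fintype.card K ^ 2) {ω : L}
    (hω : IsPrimitiveRoot ω (Fintype.card L - 1)) {ℓ : ℤ}
    (hℓ : ¬ ((Fintype.card K : ℤ) + 1 ∣ ℓ)) : ω ^ ℓ ∉ Set.range (algebraMap K L) := by
  rintro ⟨r, hr⟩
  set q := Fintype.card K
  have hq : 1 < q := Fintype.one_lt_card
  have hω0 : ω ≠ 0 := hω.ne_zero (Nat.sub_pos_of_lt Fintype.one_lt_card).ne'
  have hfix : ω ^ (ℓ * q) = ω ^ ℓ := by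
    rw [zpow_mul, zpow_natCast, ← hr, algebraMap_pow_card]
  have hone : ω ^ (ℓ * ((q : ℤ) - 1)) = 1 := by
    rw [mul_sub, mul_one, zpow_sub₀ hω0, hfix, div_self (zpow_ne_zero _ hω0)]
  rw [hω.zpow_eq_one_iff_dvd, hL, Nat.cast_sub (Nat.one_le_pow _ _ (by omega)), Nat.cast_pow,
    Nat.cast_one, show (q : ℤ) ^ 2 - 1 = ((q : ℤ) + 1) * (q - 1) by ring] at hone
  exact hℓ ((mul_dvd_mul_iff_right (by omega)).mp hone)

end FiniteField

theorem orderOf_quadraticChar_ringHomComp_complex {F : Type*} [Field F] [Fintype F]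
    [DecidableEq F] (hF : ringChar F ≠ 2) :
    orderOf ((quadraticChar F).ringHomComp (Int.castRingHom ℂ)) = 2 := by
  refine orderOf_eq_prime ((quadraticChar_isQuadratic F).comp _).sq_eq_one fun h ↦ ?_
  obtain ⟨a, ha⟩ := quadraticChar_exists_neg_one' hF
  have := congr($h a)
  norm_num [ha] at this

theorem sum_apply_sq_eq_sum_one_add_quadraticChar_mul {F R : Type*} [Field F] [Fintype F]
    [DecidableEq F] [CommRing R] (hF : ringChar F ≠ 2) (f : F → R) :
    ∑ y, f (y ^ 2) = ∑ u, (1 + (quadraticChar F u : R)) * f u := by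
  rw [← sum_fiberwise univ (· ^ 2)]
  refine sum_congr rfl fun u _ ↦ ?_
  have hcard := quadraticChar_card_sqrts hF u
  rw [Set.toFinset_ofPred] at hcard
  rw [sum_congr rfl fun y hy ↦ by rw [(mem_filter.mp hy).2], sum_const, nsmul_eq_mul]
  congr 1
  exact_mod_cast congrArg (Int.cast : ℤ → R) (hcard.trans (add_comm _ _))

namespace MulChar

theorem apply_eq_apply_norm {K L R : Type*} [Field K] [Field L] [Fintype L] [Algebra K L]
    [CommMonoidWithZero R] {ω : L} (hω : IsPrimitiveRoot ω (Fintype.card L - 1))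
    {χ : MulChar L R} {ψ : MulChar K R} (h : χ ω = ψ (Algebra.norm K ω)) (z : L) :
    χ z = ψ (Algebra.norm K z) := by
  rcases eq_or_ne z 0 with rfl | hz
  · simp
  obtain ⟨k, rfl⟩ := FiniteField.exists_pow_eq_of_isPrimitiveRoot hω hz
  simp only [map_pow, h]

section OrderTwo

variable {M R : Type*} [CommMonoid M] [CommRing R] [IsDomain R]

theorem apply_eq_neg_one_of_orderOf_eq_two {g : Mˣ} (hg : ∀ x, x ∈ Subgroup.zpowers g)
    {χ : MulChar M R} (hχ : orderOf χ = 2) : χ g = -1 := by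
  have hsq : χ g ^ 2 = 1 := by
    rw [← pow_apply' χ two_ne_zero, ← hχ, pow_orderOf_eq_one, one_apply_coe]
  refine (sq_eq_one_iff.mp hsq).resolve_left fun h ↦ ?_
  have : χ = 1 := (eq_iff hg χ 1).mpr (by rw [h, one_apply_coe])
  simp [this] at hχ

theorem eq_of_orderOf_eq_two [IsCyclic Mˣ] {χ ψ : MulChar M R} (hχ : orderOf χ = 2)
    (hψ : orderOf ψ = 2) : χ = ψ := by
  obtain ⟨g, hg⟩ := IsCyclic.exists_generator (α := Mˣ)
  rw [eq_iff hg, apply_eq_neg_one_of_orderOf_eq_two hg hχ,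
    apply_eq_neg_one_of_orderOf_eq_two hg hψ]

end OrderTwo

variable {F R : Type*} [Field F] [Fintype F] [CommRing R]

theorem sum_sq_add_eq_jacobiSum [DecidableEq F] [IsDomain R] (hF : ringChar F ≠ 2)
    {χ : MulChar F R} (hχ : χ ≠ 1) {d : F} (hd : d ≠ 0) :
    ∑ y, χ (y ^ 2 + d) = (quadraticChar F).ringHomComp (Int.castRingHom R) (-d) * χ d
      * jacobiSum ((quadraticChar F).ringHomComp (Int.castRingHom R)) χ := by
  set ρ := (quadraticChar F).ringHomComp (Int.castRingHom R)
  have hshift : ∑ u, χ (u + d) = 0 :=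
    (Equiv.sum_comp (Equiv.addRight d) χ).trans (sum_eq_zero_of_ne_one hχ)
  have hscale : ∑ u, ρ u * χ (u + d) = ∑ v, ρ (-d * v) * χ (-d * v + d) :=
    (Equiv.sum_comp (Equiv.mulLeft₀ (-d) (neg_ne_zero.mpr hd)) (fun u ↦ ρ u * χ (u + d))).symm
  calc ∑ y, χ (y ^ 2 + d) = ∑ u, (1 + ρ u) * χ (u + d) :=
        sum_apply_sq_eq_sum_one_add_quadraticChar_mul hF (fun u ↦ χ (u + d))
    _ = ∑ u, ρ u * χ (u + d) := by
      simp only [add_mul, one_mul, sum_add_distrib, hshift, zero_add]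
    _ = ρ (-d) * χ d * jacobiSum ρ χ := by
      rw [hscale, jacobiSum, mul_sum]
      refine sum_congr rfl fun v _ ↦ ?_
      rw [show -d * v + d = d * (1 - v) by ring, map_mul, map_mul]
      ring

theorem sum_one_add_mul_add_mul_sq_eq_mul_sum_sq_add [NeZero (2 : F)] (χ : MulChar F R)
    {n : F} (hn : n ≠ 0) (t : F) :
    ∑ x, χ (1 + t * x + n * x ^ 2) = χ n * ∑ y, χ (y ^ 2 + (n - t ^ 2 / 4) / n ^ 2) := by
  rw [mul_sum, ← Equiv.sum_comp (Equiv.subRight (t / (2 * n)))]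
  refine sum_congr rfl fun x _ ↦ ?_
  rw [Equiv.subRight_apply, ← map_mul]
  have : (4 : F) ≠ 0 := by simpa [show (4 : F) = 2 ^ 2 by norm_num] using two_ne_zero
  congr 1
  field_simp
  ring

theorem sum_one_add_mul_add_mul_sq_of_orderOf_eq_four [DecidableEq F] (hF : ringChar F ≠ 2)
    (hF₄ : IsSquare (-1 : F)) {χ : MulChar F ℂ} (hχ : orderOf χ = 4) {n t : F} (hn : n ≠ 0)
    (hm : ¬ IsSquare (n - t ^ 2 / 4)) :
    ∑ x, χ (1 + t * x + n * x ^ 2)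
      = χ n ^ 3 * χ (n - t ^ 2 / 4) ^ 3 * jacobiSum (χ ^ 2) χ := by
  have : NeZero (2 : F) := ⟨Ring.two_ne_zero hF⟩
  set m := n - t ^ 2 / 4
  set ρ := (quadraticChar F).ringHomComp (Int.castRingHom ℂ)
  have hρ : χ ^ 2 = ρ := eq_of_orderOf_eq_two (by rw [orderOf_pow, hχ]; norm_num)
    (orderOf_quadraticChar_ringHomComp_complex hF)
  have hρ_apply {a : F} (ha : ¬ IsSquare a) : ρ a = -1 := by
    simp [ρ, quadraticChar_neg_one_iff_not_isSquare.mpr ha]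
  have hm_eq : m / n ^ 2 * n ^ 2 = m := div_mul_cancel₀ _ (pow_ne_zero 2 hn)
  have hd : m / n ^ 2 ≠ 0 :=
    div_ne_zero (by rintro h; exact hm ⟨0, by simp [h]⟩) (pow_ne_zero 2 hn)
  have hnd : ¬ IsSquare (-(m / n ^ 2)) := by
    rintro ⟨s, hs⟩
    obtain ⟨i, hi⟩ := hF₄
    exact hm ⟨i * s * n, by linear_combination -hm_eq - n ^ 2 * hs + s ^ 2 * n ^ 2 * hi⟩
  have hχm : χ m ^ 2 = -1 := by rw [← pow_apply' χ two_ne_zero, hρ, hρ_apply hm]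
  have hχn : χ n ^ 4 = 1 := by
    rw [← pow_apply' χ four_ne_zero, ← hχ, pow_orderOf_eq_one, one_apply hn.isUnit]
  have hχd : χ (m / n ^ 2) * χ n ^ 2 = χ m := by rw [← map_pow, ← map_mul, hm_eq]
  have hχ1 : χ ≠ 1 := by rintro rfl; simp at hχ
  rw [sum_one_add_mul_add_mul_sq_eq_mul_sum_sq_add χ hn, sum_sq_add_eq_jacobiSum hF hχ1 hd, hρ,
    hρ_apply hnd]
  linear_combination (-(χ n ^ 3 * χ m * jacobiSum ρ χ)) * hχm
    - (χ n ^ 3 * jacobiSum ρ χ) * hχd + (χ n * χ (m / n ^ 2) * jacobiSum ρ χ) * hχn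

end MulChar

theorem stmt_6_general (K L : Type*) [Field K] [Field L] [Fintype K] [Fintype L]
    [Algebra K L] (q : ℕ)
    (hq : Fintype.card K = q) (hL : Fintype.card L = q ^ 2) (hq4 : q % 4 = 1)
    (ω : L) (hω : orderOf ω = q ^ 2 - 1)
    (χ₄ : MulChar L ℂ)
    (η χ₄' : MulChar K ℂ) (hη : orderOf η = 2) (hχ₄' : orderOf χ₄' = 4)
    (γ : K) (hγ : algebraMap K L γ = ω ^ (q + 1))
    (hcompat : χ₄ ω = χ₄' γ)
    (ℓ : ℤ) (hℓ : ¬ ((q : ℤ) + 1 ∣ ℓ))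
    (n t : K)
    (hn : algebraMap K L n = ω ^ (ℓ * ((q : ℤ) + 1)))
    (ht : algebraMap K L t = ω ^ ℓ + ω ^ (ℓ * (q : ℤ))) :
    ∑ x : K, χ₄ (1 + ω ^ ℓ * algebraMap K L x)
      = (χ₄' n) ^ 3 * (χ₄' (n - t ^ 2 / 4)) ^ 3 * (∑ x : K, η x * χ₄' (1 - x)) := by
  classical
  have hKL : Fintype.card L = Fintype.card K ^ 2 := by rw [hL, hq]
  have hω' : IsPrimitiveRoot ω (Fintype.card L - 1) := hL ▸ hω ▸ IsPrimitiveRoot.orderOf ω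
  have hK : ringChar K ≠ 2 := fun h ↦ by have := FiniteField.even_card_of_char_two h; omega
  have hK₄ : IsSquare (-1 : K) := FiniteField.isSquare_neg_one_iff.mpr (by omega)
  have hnorm_ω : Algebra.norm K ω = γ := (algebraMap K L).injective <| by
    rw [FiniteField.algebraMap_norm_eq_pow_card_add_one hKL, hγ, hq]
  have hnorm : Algebra.norm K (ω ^ ℓ) = n := (algebraMap K L).injective <| by
    rw [FiniteField.algebraMap_norm_eq_pow_card_add_one hKL, hn, hq, ← zpow_natCast, ← zpow_mul,
      Nat.cast_succ]
  have htrace : Algebra.trace K L (ω ^ ℓ) = t := (algebraMap K L).injective <| by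
    rw [FiniteField.algebraMap_trace_eq_add_pow_card hKL, ht, hq, ← zpow_natCast, ← zpow_mul]
  have hm : ¬ IsSquare (n - t ^ 2 / 4) := hnorm ▸ htrace ▸
    FiniteField.not_isSquare_norm_sub_trace_sq_div_four hKL hK hK₄
      (FiniteField.zpow_notMem_range_algebraMap hKL hω' (hq ▸ hℓ))
  have hω0 : ω ≠ 0 := hω'.ne_zero (Nat.sub_pos_of_lt Fintype.one_lt_card).ne'
  have hn0 : n ≠ 0 := hnorm ▸ Algebra.norm_ne_zero_iff.mpr (zpow_ne_zero _ hω0)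
  have hη' : η = χ₄' ^ 2 :=
    MulChar.eq_of_orderOf_eq_two hη (by rw [orderOf_pow, hχ₄']; norm_num)
  calc ∑ x : K, χ₄ (1 + ω ^ ℓ * algebraMap K L x) = ∑ x : K, χ₄' (1 + t * x + n * x ^ 2) := by
        simp only [MulChar.apply_eq_apply_norm hω' (hnorm_ω ▸ hcompat),
          FiniteField.norm_one_add_mul_algebraMap hKL, hnorm, htrace]
    _ = χ₄' n ^ 3 * χ₄' (n - t ^ 2 / 4) ^ 3 * jacobiSum η χ₄' := by
      rw [hη']
      exact MulChar.sum_one_add_mul_add_mul_sq_of_orderOf_eq_four hK hK₄ hχ₄' hn0 hm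

/-- With `q ≡ 1 (mod 4)` a prime power, `ω` a primitive element of
`F_{q²}`, `χ₄` a multiplicative character of order `4` of `F_{q²}`, `η, χ₄'`
the multiplicative characters of `F_q` of orders `2` and `4` with
`χ₄(ω) = χ₄'(ω^{q+1})`, `ℓ` an integer not divisible by `q + 1`,
`n = ω^{ℓ(q+1)}` and `t = ω^ℓ + ω^{ℓq}` (elements of `F_q`), one has
`∑_{x ∈ F_q} χ₄(1 + ω^ℓ x) = χ₄'(n)³ χ₄'(n − t²/4)³ J(η, χ₄')`. -/
theorem stmt_6 (K L : Type*) [Field K] [Field L] [Fintype K] [Fintype L]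
    [Algebra K L] (q : ℕ)
    (hq : Fintype.card K = q) (hL : Fintype.card L = q ^ 2) (hq4 : q % 4 = 1)
    (ω : L) (hω : orderOf ω = q ^ 2 - 1)
    (χ₄ : MulChar L ℂ) (hχ₄ : orderOf χ₄ = 4)
    (η χ₄' : MulChar K ℂ) (hη : orderOf η = 2) (hχ₄' : orderOf χ₄' = 4)
    (γ : K) (hγ : algebraMap K L γ = ω ^ (q + 1))
    (hcompat : χ₄ ω = χ₄' γ)
    (ℓ : ℤ) (hℓ : ¬ ((q : ℤ) + 1 ∣ ℓ))
    (n t : K)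
    (hn : algebraMap K L n = ω ^ (ℓ * ((q : ℤ) + 1)))
    (ht : algebraMap K L t = ω ^ ℓ + ω ^ (ℓ * (q : ℤ))) :
    ∑ x : K, χ₄ (1 + ω ^ ℓ * algebraMap K L x)
      = (χ₄' n) ^ 3 * (χ₄' (n - t ^ 2 / 4)) ^ 3 * (∑ x : K, η x * χ₄' (1 - x)) :=
  stmt_6_general K L q hq hL hq4 ω hω χ₄ η χ₄' hη hχ₄' γ hγ hcompat ℓ hℓ n t hn ht
end

section
/- With the notation of the context, for every s ∈ F_q, setting u = 1 + t·s + n·s², the character sum identity ∑_{x ∈ F_q, x ≠ s} χ₄(1 + ω^ℓ·x)·η(x − s) = χ₄'(u)³ · χ₄'(n − t²/4)³ · J(η, χ₄') − χ₄'(n) holds. -/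
/-! Since `q = #K`, `z ↦ z ^ (q + 1)` is the norm `L → K`; as `ω` generates `Lˣ` and
`γ = ω ^ (q + 1)`, the compatibility `χ₄ ω = χ₄' γ` gives `χ₄ z = χ₄' (z ^ (q + 1))`. For
`θ = ω ^ ℓ`, which lies outside `K` because `q + 1 ∤ ℓ`, one has
`(1 + θ x) ^ (q + 1) = 1 + t x + n x²`, a quadratic over `K` with discriminant `(θ - θ ^ q)² ≠ 0`.
So the sum is a character sum over `K`. Shifting `x` by `s` and substituting `x - s = w⁻¹`
(using `η = χ₄'²`) turns it into `∑ χ₄' (u w² + b w + n) - χ₄' n`. Completing the square to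
`u w² + c` and counting square roots with the quadratic character `η` leaves
`η (-c / u) χ₄' c J(η, χ₄')`, which is the stated constant because `χ₄' ^ 4 = 1`. -/

open Finset

section Generator

variable {F R : Type*} [Field F] [Fintype F] [CommRing R]

theorem IsPrimitiveRoot.exists_pow_eq_of_card_sub_one {ω : F}
    (hω : IsPrimitiveRoot ω (Fintype.card F - 1)) {z : F} (hz : z ≠ 0) :
    ∃ m : ℕ, ω ^ m = z := by
  have : NeZero (Fintype.card F - 1) := ⟨by have := Fintype.one_lt_card (α := F); omega⟩
  obtain ⟨m, -, hm⟩ := hω.eq_pow_of_pow_eq_one (FiniteField.pow_card_sub_one_eq_one z hz)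
  exact ⟨m, hm⟩

theorem IsPrimitiveRoot.isUnit_of_card_sub_one {γ : F}
    (hγ : IsPrimitiveRoot γ (Fintype.card F - 1)) : IsUnit γ :=
  hγ.isUnit (by have := Fintype.one_lt_card (α := F); omega)

theorem MulChar.eq_of_apply_eq_of_isPrimitiveRoot {γ : F}
    (hγ : IsPrimitiveRoot γ (Fintype.card F - 1)) {χ ψ : MulChar F R} (h : χ γ = ψ γ) :
    χ = ψ := by
  refine MulChar.ext fun a => ?_
  obtain ⟨m, hm⟩ := hγ.exists_pow_eq_of_card_sub_one a.ne_zero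
  rw [← hm, map_pow, map_pow, h]

theorem MulChar.apply_eq_neg_one_of_orderOf_eq_two_s7 [IsDomain R] {γ : F}
    (hγ : IsPrimitiveRoot γ (Fintype.card F - 1)) {χ : MulChar F R} (hχ : orderOf χ = 2) :
    χ γ = -1 := by
  obtain ⟨hsq, hne⟩ := orderOf_eq_prime_iff.mp hχ
  have h1 : χ γ ^ 2 = 1 := by
    rw [← χ.pow_apply' two_ne_zero, hsq, MulChar.one_apply hγ.isUnit_of_card_sub_one]
  refine (sq_eq_one_iff.mp h1).resolve_left fun h => hne ?_
  exact eq_of_apply_eq_of_isPrimitiveRoot hγ <| by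
    rw [h, MulChar.one_apply hγ.isUnit_of_card_sub_one]

theorem MulChar.eq_of_orderOf_eq_two_s7 [IsDomain R] {γ : F}
    (hγ : IsPrimitiveRoot γ (Fintype.card F - 1)) {χ ψ : MulChar F R} (hχ : orderOf χ = 2)
    (hψ : orderOf ψ = 2) : χ = ψ :=
  eq_of_apply_eq_of_isPrimitiveRoot hγ <| by
    rw [apply_eq_neg_one_of_orderOf_eq_two_s7 hγ hχ, apply_eq_neg_one_of_orderOf_eq_two_s7 hγ hψ]

variable [DecidableEq F]

theorem quadraticChar_eq_neg_one_of_isPrimitiveRoot (hF : ringChar F ≠ 2) {γ : F}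
    (hγ : IsPrimitiveRoot γ (Fintype.card F - 1)) : quadraticChar F γ = -1 := by
  have hodd := FiniteField.odd_card_of_char_ne_two hF
  have h3 := Fintype.one_lt_card (α := F)
  rw [quadraticChar_eq_pow_of_char_ne_two hF hγ.isUnit_of_card_sub_one.ne_zero,
    if_neg (hγ.pow_ne_one_of_pos_of_lt (by omega) (by omega))]

theorem MulChar.eq_quadraticChar_of_orderOf_eq_two [IsDomain R] (hF : ringChar F ≠ 2) {γ : F}
    (hγ : IsPrimitiveRoot γ (Fintype.card F - 1)) {η : MulChar F R} (hη : orderOf η = 2) :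
    η = (quadraticChar F).ringHomComp (Int.castRingHom R) :=
  eq_of_apply_eq_of_isPrimitiveRoot hγ <| by
    rw [apply_eq_neg_one_of_orderOf_eq_two_s7 hγ hη, ringHomComp_apply,
      quadraticChar_eq_neg_one_of_isPrimitiveRoot hF hγ, map_neg, map_one]

end Generator

theorem four_ne_zero_of_ringChar_ne_two {F : Type*} [Field F] (hF : ringChar F ≠ 2) :
    (4 : F) ≠ 0 := by
  have := mul_ne_zero (Ring.two_ne_zero hF) (Ring.two_ne_zero hF)
  norm_num at this
  exact this

section CharacterSums

variable {F R : Type*} [Field F] [Fintype F] [CommRing R]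

theorem sum_comp_sq_eq_sum_quadraticChar_add_one_zsmul [DecidableEq F] {M : Type*}
    [AddCommGroup M] (hF : ringChar F ≠ 2) (f : F → M) :
    ∑ v, f (v ^ 2) = ∑ z, (quadraticChar F z + 1) • f z := by
  rw [← sum_fiberwise' univ (· ^ 2) f]
  refine sum_congr rfl fun z _ => ?_
  rw [sum_const, ← quadraticChar_card_sqrts hF z, Set.toFinset_ofPred, natCast_zsmul]

theorem sum_comp_quadratic_eq_sum_comp_sq_add {M : Type*} [AddCommMonoid M] (f : F → M)
    (hF : ringChar F ≠ 2) {a : F} (ha : a ≠ 0) (b c : F) :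
    ∑ v, f (a * v ^ 2 + b * v + c) = ∑ v, f (a * v ^ 2 + (4 * a * c - b ^ 2) / 4 / a) := by
  refine (Fintype.sum_bijective (· - b / (2 * a)) (Equiv.subRight _).bijective _ _
    fun v => ?_).symm
  have h2 : (2 : F) ≠ 0 := Ring.two_ne_zero hF
  have h4 := four_ne_zero_of_ringChar_ne_two hF
  congr 1
  field_simp
  ring

theorem MulChar.sum_apply_mul_add_eq_zero [IsDomain R] {χ : MulChar F R} (hχ : χ ≠ 1) {a : F}
    (ha : a ≠ 0) (c : F) : ∑ z, χ (a * z + c) = 0 := by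
  rw [← MulChar.sum_eq_zero_of_ne_one hχ]
  exact Fintype.sum_bijective _ ((Equiv.mulLeft₀ a ha).trans (Equiv.addRight c)).bijective _ _
    fun _ => rfl

theorem MulChar.sum_mul_apply_mul_add_eq_jacobiSum (η χ : MulChar F R) {a c : F} (ha : a ≠ 0)
    (hc : c ≠ 0) : ∑ z, η z * χ (a * z + c) = η (-c / a) * χ c * jacobiSum η χ := by
  rw [jacobiSum, mul_sum]
  refine (Fintype.sum_bijective _ (mulLeft_bijective₀ (-c / a) (by simp [ha, hc])) _ _
    fun x => ?_).symm
  have : a * (-c / a * x) + c = c * (1 - x) := by field_simp; ring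
  simp only [this, map_mul]
  ring

variable [DecidableEq F] {χ η : MulChar F R}

theorem MulChar.apply_pow_four_eq_one (hχ : χ ^ 2 = η)
    (hη : η = (quadraticChar F).ringHomComp (Int.castRingHom R)) {a : F} (ha : a ≠ 0) :
    χ a ^ 4 = 1 := by
  rw [show 4 = 2 * 2 from rfl, pow_mul, ← χ.pow_apply' two_ne_zero, hχ, hη, ringHomComp_apply,
    ← map_pow, quadraticChar_sq_one ha, map_one]

theorem MulChar.sum_apply_quadratic_mul_add_eq_sum_apply_reverse (hχ : χ ^ 2 = η)
    (hη : η = (quadraticChar F).ringHomComp (Int.castRingHom R)) (a b c : F) :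
    ∑ y, χ (a + b * y + c * y ^ 2) * η y + χ c = ∑ w, χ (a * w ^ 2 + b * w + c) := by
  -- `χ (y ^ 2) * η y = χ y ^ 4 = 1`, and `y = 0` is where `0⁻¹ = 0` produces the extra `χ c`.
  have key : ∀ y, χ (a + b * y + c * y ^ 2) * η y + (if y = 0 then χ c else 0)
      = χ (a * y⁻¹ ^ 2 + b * y⁻¹ + c) := by
    intro y
    by_cases hy : y = 0
    · simp [hy]
    have : a + b * y + c * y ^ 2 = y ^ 2 * (a * y⁻¹ ^ 2 + b * y⁻¹ + c) := by field_simp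
    rw [if_neg hy, add_zero, this, map_mul, map_pow, ← hχ, χ.pow_apply' two_ne_zero]
    linear_combination χ (a * y⁻¹ ^ 2 + b * y⁻¹ + c) * apply_pow_four_eq_one hχ hη hy
  have hinv := Equiv.sum_comp (Equiv.inv F) fun w => χ (a * w ^ 2 + b * w + c)
  simp only [Equiv.inv_apply] at hinv
  rw [← hinv, ← sum_congr rfl fun y _ => key y, sum_add_distrib, Fintype.sum_ite_eq']

variable [IsDomain R]

theorem MulChar.sum_apply_quadratic_eq_jacobiSum (hF : ringChar F ≠ 2) (hχ1 : χ ≠ 1)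
    (hχ : χ ^ 2 = η) (hη : η = (quadraticChar F).ringHomComp (Int.castRingHom R)) {a : F}
    (ha : a ≠ 0) (b c : F) (hd : 4 * a * c - b ^ 2 ≠ 0) :
    ∑ v, χ (a * v ^ 2 + b * v + c)
      = χ a ^ 3 * χ ((4 * a * c - b ^ 2) / 4) ^ 3 * jacobiSum η χ := by
  set e := (4 * a * c - b ^ 2) / 4
  rw [sum_comp_quadratic_eq_sum_comp_sq_add _ hF ha]
  have he : e ≠ 0 := div_ne_zero hd (four_ne_zero_of_ringChar_ne_two hF)
  have hsq : ∑ v, χ (a * v ^ 2 + e / a) = ∑ z, η z * χ (a * z + e / a) := by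
    rw [sum_comp_sq_eq_sum_quadraticChar_add_one_zsmul hF (fun z => χ (a * z + e / a))]
    simp only [zsmul_eq_mul, Int.cast_add, Int.cast_one, add_mul, one_mul, sum_add_distrib,
      sum_apply_mul_add_eq_zero hχ1 ha, add_zero, hη, ringHomComp_apply, eq_intCast]
  have hηχ : ∀ x, η x = χ x ^ 2 := fun x => by rw [← hχ, χ.pow_apply' two_ne_zero]
  have hA := apply_pow_four_eq_one hχ hη ha
  have hχe : χ (e / a) = χ e * χ a ^ 3 := calc
    χ (e / a) = χ (e / a) * χ a ^ 4 := by rw [hA, mul_one]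
    _ = χ (e / a * a) * χ a ^ 3 := by rw [map_mul]; ring
    _ = χ e * χ a ^ 3 := by rw [div_mul_cancel₀ e ha]
  have hη1 : η (-1) = 1 := by rw [hηχ, ← map_pow, neg_one_sq, map_one]
  have hηe : η (-(e / a) / a) = η e := by
    rw [show -(e / a) / a = -1 * e * a⁻¹ ^ 2 by field_simp, map_mul, map_mul, map_pow, hη1,
      hηχ a⁻¹, ← pow_mul, apply_pow_four_eq_one hχ hη (inv_ne_zero ha)]
    ring
  rw [hsq, sum_mul_apply_mul_add_eq_jacobiSum η χ ha (div_ne_zero he ha), hηe, hχe, hηχ]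
  ring

theorem MulChar.sum_filter_ne_apply_quadratic_mul_apply_sub (hF : ringChar F ≠ 2) (hχ1 : χ ≠ 1)
    (hχ : χ ^ 2 = η) (hη : η = (quadraticChar F).ringHomComp (Int.castRingHom R)) {t n s : F}
    (hu : 1 + t * s + n * s ^ 2 ≠ 0) (hd : t ^ 2 - 4 * n ≠ 0) :
    ∑ x ∈ univ.filter (fun x : F => x ≠ s), χ (1 + t * x + n * x ^ 2) * η (x - s)
      = χ (1 + t * s + n * s ^ 2) ^ 3 * χ (n - t ^ 2 / 4) ^ 3 * jacobiSum η χ - χ n := by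
  have hshift : ∑ x ∈ univ.filter (fun x : F => x ≠ s), χ (1 + t * x + n * x ^ 2) * η (x - s)
      = ∑ y, χ ((1 + t * s + n * s ^ 2) + (t + 2 * n * s) * y + n * y ^ 2) * η y := by
    rw [sum_filter_of_ne fun x _ hx => by rintro rfl; simp at hx]
    refine Fintype.sum_equiv (Equiv.subRight s) _ _ fun x => ?_
    simp only [Equiv.subRight_apply]
    ring_nf
  rw [hshift, eq_sub_iff_add_eq, sum_apply_quadratic_mul_add_eq_sum_apply_reverse hχ hη,
    sum_apply_quadratic_eq_jacobiSum hF hχ1 hχ hη hu _ _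
      (by contrapose! hd; linear_combination -hd)]
  have h4 := four_ne_zero_of_ringChar_ne_two hF
  rw [show (4 * (1 + t * s + n * s ^ 2) * n - (t + 2 * n * s) ^ 2) / 4 = n - t ^ 2 / 4 by
    field_simp; ring]

end CharacterSums

section Frobenius

variable {K L : Type*} [Field K] [Fintype K] [Field L] [Algebra K L]

theorem algebraMap_pow_card (a : K) : algebraMap K L a ^ Fintype.card K = algebraMap K L a :=
  (FiniteField.frobeniusAlgHom K L).commutes a

theorem one_add_mul_algebraMap_pow_card_succ {θ : L} {t n : K}
    (ht : algebraMap K L t = θ + θ ^ Fintype.card K)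
    (hn : algebraMap K L n = θ ^ (Fintype.card K + 1)) (x : K) :
    (1 + θ * algebraMap K L x) ^ (Fintype.card K + 1)
      = algebraMap K L (1 + t * x + n * x ^ 2) := by
  have hfrob : (1 + θ * algebraMap K L x) ^ Fintype.card K
      = 1 + θ ^ Fintype.card K * algebraMap K L x := by
    change FiniteField.frobeniusAlgHom K L _ = _
    rw [map_add, map_one, map_mul, AlgHom.commutes]
    rfl
  rw [pow_succ, hfrob, map_add, map_add, map_one, map_mul, map_mul, map_pow, ht, hn]
  ring

theorem one_add_mul_algebraMap_ne_zero {θ : L} (hθ : θ ^ Fintype.card K ≠ θ) (x : K) :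
    1 + θ * algebraMap K L x ≠ 0 := by
  intro h
  have hx : algebraMap K L x ≠ 0 := by rintro hx; simp [hx] at h
  have : θ = algebraMap K L (-x⁻¹) := by
    rw [map_neg, map_inv₀]
    field_simp
    linear_combination h
  exact hθ (by rw [this, algebraMap_pow_card])

theorem one_add_mul_add_mul_sq_ne_zero {θ : L} (hθ : θ ^ Fintype.card K ≠ θ) {t n : K}
    (ht : algebraMap K L t = θ + θ ^ Fintype.card K)
    (hn : algebraMap K L n = θ ^ (Fintype.card K + 1)) (x : K) : 1 + t * x + n * x ^ 2 ≠ 0 := by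
  intro h
  have hpow := one_add_mul_algebraMap_pow_card_succ ht hn x
  rw [h, map_zero, pow_eq_zero_iff (Nat.succ_ne_zero _)] at hpow
  exact one_add_mul_algebraMap_ne_zero hθ x hpow

theorem sq_sub_four_mul_ne_zero {θ : L} (hθ : θ ^ Fintype.card K ≠ θ) {t n : K}
    (ht : algebraMap K L t = θ + θ ^ Fintype.card K)
    (hn : algebraMap K L n = θ ^ (Fintype.card K + 1)) : t ^ 2 - 4 * n ≠ 0 := by
  have hdisc : algebraMap K L (t ^ 2 - 4 * n) = (θ ^ Fintype.card K - θ) ^ 2 := by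
    rw [map_sub, map_pow, map_mul, ht, hn, map_ofNat]
    ring
  intro h
  rw [h, map_zero, eq_comm, sq_eq_zero_iff, sub_eq_zero] at hdisc
  exact hθ hdisc

end Frobenius

theorem MulChar.apply_eq_of_pow_eq_algebraMap {K L R : Type*} [Field K] [Field L] [Fintype L]
    [Algebra K L] [CommRing R] {χ : MulChar L R} {χ' : MulChar K R} {ω : L}
    (hω : IsPrimitiveRoot ω (Fintype.card L - 1)) {e : ℕ} (he : e ≠ 0) {γ : K}
    (hγ : algebraMap K L γ = ω ^ e) (hχ : χ ω = χ' γ) {z : L} {a : K}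
    (hz : z ^ e = algebraMap K L a) : χ z = χ' a := by
  by_cases hz0 : z = 0
  · have ha : a = 0 := by
      rw [hz0, zero_pow he, eq_comm, map_eq_zero_iff _ (algebraMap K L).injective] at hz
      exact hz
    rw [hz0, ha, χ.map_nonunit not_isUnit_zero, χ'.map_nonunit not_isUnit_zero]
  obtain ⟨m, rfl⟩ := hω.exists_pow_eq_of_card_sub_one hz0
  have ha : a = γ ^ m := (algebraMap K L).injective <| by
    rw [← hz, map_pow, hγ, ← pow_mul, ← pow_mul, mul_comm]
  rw [ha, map_pow, map_pow, hχ]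

theorem IsPrimitiveRoot.zpow_pow_ne_self {L : Type*} [Field L] {ω : L} {q : ℕ}
    (hω : IsPrimitiveRoot ω (q ^ 2 - 1)) (hq : 1 < q) {ℓ : ℤ} (hℓ : ¬(q + 1 : ℤ) ∣ ℓ) :
    (ω ^ ℓ) ^ q ≠ ω ^ ℓ := by
  intro h
  have hω0 : ω ≠ 0 := hω.ne_zero (Nat.sub_pos_of_lt (Nat.one_lt_pow two_ne_zero hq)).ne'
  have h1 : ω ^ (ℓ * (q - 1 : ℤ)) = 1 := by
    rw [mul_sub, mul_one, zpow_sub₀ hω0, zpow_mul, zpow_natCast, h, div_self (zpow_ne_zero _ hω0)]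
  have hcast : ((q ^ 2 - 1 : ℕ) : ℤ) = (q + 1) * (q - 1) := by
    rw [Nat.cast_sub (Nat.one_le_pow _ _ (by omega))]
    push_cast
    ring
  rw [hω.zpow_eq_one_iff_dvd, hcast] at h1
  exact hℓ ((mul_dvd_mul_iff_right (by omega)).mp h1)

theorem IsPrimitiveRoot.of_algebraMap_eq_pow_succ {K L : Type*} [Field K] [Field L]
    [Algebra K L] {ω : L} {q : ℕ} (hω : IsPrimitiveRoot ω (q ^ 2 - 1)) (hq : 1 < q) {γ : K}
    (hγ : algebraMap K L γ = ω ^ (q + 1)) : IsPrimitiveRoot γ (q - 1) :=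
  .of_map_of_injective (f := algebraMap K L)
    (hγ ▸ hω.pow (Nat.sub_pos_of_lt (Nat.one_lt_pow two_ne_zero hq))
      (by simpa using Nat.sq_sub_sq q 1)) (algebraMap K L).injective

theorem stmt_7_general (K L : Type*) [Field K] [Field L] [Fintype K] [Fintype L]
    [Algebra K L] [DecidableEq K] (q : ℕ)
    (hq : Fintype.card K = q) (hL : Fintype.card L = q ^ 2) (hq4 : q % 4 = 1)
    (ω : L) (hω : orderOf ω = q ^ 2 - 1)
    (χ₄ : MulChar L ℂ)
    (η χ₄' : MulChar K ℂ) (hη : orderOf η = 2) (hχ₄' : orderOf χ₄' = 4)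
    (γ : K) (hγ : algebraMap K L γ = ω ^ (q + 1))
    (hcompat : χ₄ ω = χ₄' γ)
    (ℓ : ℤ) (hℓ : ¬ ((q : ℤ) + 1 ∣ ℓ))
    (n t : K)
    (hn : algebraMap K L n = ω ^ (ℓ * ((q : ℤ) + 1)))
    (ht : algebraMap K L t = ω ^ ℓ + ω ^ (ℓ * (q : ℤ)))
    (s : K) (u : K) (hu : u = 1 + t * s + n * s ^ 2) :
    ∑ x ∈ Finset.univ.filter (fun x : K => x ≠ s),
        χ₄ (1 + ω ^ ℓ * algebraMap K L x) * η (x - s)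
      = (χ₄' u) ^ 3 * (χ₄' (n - t ^ 2 / 4)) ^ 3 * (∑ x : K, η x * χ₄' (1 - x))
          - χ₄' n := by
  subst hq hu
  have hq1 : 1 < Fintype.card K := Fintype.one_lt_card
  have hω' : IsPrimitiveRoot ω (Fintype.card K ^ 2 - 1) := hω ▸ IsPrimitiveRoot.orderOf ω
  have hγ' := hω'.of_algebraMap_eq_pow_succ hq1 hγ
  have hF : ringChar K ≠ 2 := fun h => by have := FiniteField.even_card_iff_char_two.mp h; omega
  have ht' : algebraMap K L t = ω ^ ℓ + (ω ^ ℓ) ^ Fintype.card K := by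
    rw [ht, zpow_mul, zpow_natCast]
  have hn' : algebraMap K L n = (ω ^ ℓ) ^ (Fintype.card K + 1) := by
    rw [hn, zpow_mul]
    norm_cast
  have hθ := hω'.zpow_pow_ne_self hq1 hℓ
  have hnorm (x : K) : χ₄ (1 + ω ^ ℓ * algebraMap K L x) = χ₄' (1 + t * x + n * x ^ 2) :=
    MulChar.apply_eq_of_pow_eq_algebraMap (hL ▸ hω') (Nat.succ_ne_zero _) hγ hcompat
      (one_add_mul_algebraMap_pow_card_succ ht' hn' x)
  rw [sum_congr rfl fun x _ => by rw [hnorm x]]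
  exact MulChar.sum_filter_ne_apply_quadratic_mul_apply_sub hF (by rintro rfl; simp at hχ₄')
    (MulChar.eq_of_orderOf_eq_two_s7 hγ'
      (by rw [orderOf_pow_of_dvd two_ne_zero (by rw [hχ₄']; norm_num), hχ₄']) hη)
    (MulChar.eq_quadraticChar_of_orderOf_eq_two hF hγ' hη)
    (one_add_mul_add_mul_sq_ne_zero hθ ht' hn' s) (sq_sub_four_mul_ne_zero hθ ht' hn')

/-- With the same setup as Statement 6, for every `s ∈ F_q`,
setting `u = 1 + ts + ns²`, one has
`∑_{x ∈ F_q, x ≠ s} χ₄(1 + ω^ℓ x) η(x − s)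
  = χ₄'(u)³ χ₄'(n − t²/4)³ J(η, χ₄') − χ₄'(n)`. -/
theorem stmt_7 (K L : Type*) [Field K] [Field L] [Fintype K] [Fintype L]
    [Algebra K L] [DecidableEq K] (q : ℕ)
    (hq : Fintype.card K = q) (hL : Fintype.card L = q ^ 2) (hq4 : q % 4 = 1)
    (ω : L) (hω : orderOf ω = q ^ 2 - 1)
    (χ₄ : MulChar L ℂ) (hχ₄ : orderOf χ₄ = 4)
    (η χ₄' : MulChar K ℂ) (hη : orderOf η = 2) (hχ₄' : orderOf χ₄' = 4)
    (γ : K) (hγ : algebraMap K L γ = ω ^ (q + 1))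
    (hcompat : χ₄ ω = χ₄' γ)
    (ℓ : ℤ) (hℓ : ¬ ((q : ℤ) + 1 ∣ ℓ))
    (n t : K)
    (hn : algebraMap K L n = ω ^ (ℓ * ((q : ℤ) + 1)))
    (ht : algebraMap K L t = ω ^ ℓ + ω ^ (ℓ * (q : ℤ)))
    (s : K) (u : K) (hu : u = 1 + t * s + n * s ^ 2) :
    ∑ x ∈ Finset.univ.filter (fun x : K => x ≠ s),
        χ₄ (1 + ω ^ ℓ * algebraMap K L x) * η (x - s)
      = (χ₄' u) ^ 3 * (χ₄' (n - t ^ 2 / 4)) ^ 3 * (∑ x : K, η x * χ₄' (1 - x))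
          - χ₄' n :=
  stmt_7_general K L q hq hL hq4 ω hω χ₄ η χ₄' hη hχ₄' γ hγ hcompat ℓ hℓ n t hn ht s u hu
end

section
/- Let q = p^r be a prime power with p a prime congruent to 1 modulo 4, let ω be a primitive element of F_{q²}, and let Tr denote the trace map from F_{q²} to F_q. For each i ∈ {0,1}, the set T_i = {x ∈ C₁^{(2,q²)} : Tr(x·ω^{(q+1)/2}) ∈ C_i^{(2,q)}} has exactly (q² − 1)/4 elements; in particular each T_i is nonempty. -/
open Polynomial

lemma gen_of_orderOf_eq {F : Type*} [Field F] [Fintype F] {g : F}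
    (hg : orderOf g = Fintype.card F - 1) (hg0 : g ≠ 0) {x : F} (hx : x ≠ 0) :
    ∃ k : ℕ, x = g ^ k := by
  classical
  have hcard : orderOf (Units.mk0 g hg0) = Fintype.card Fˣ := by
    rw [Fintype.card_units, ← hg, ← orderOf_units, Units.val_mk0]
  have htop : Subgroup.zpowers (Units.mk0 g hg0) = ⊤ := by
    apply Subgroup.eq_top_of_card_eq
    rw [Nat.card_zpowers, hcard, Nat.card_eq_fintype_card]
  have hx' : Units.mk0 x hx ∈ Subgroup.zpowers (Units.mk0 g hg0) :=
    htop ▸ Subgroup.mem_top _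
  rw [← mem_powers_iff_mem_zpowers] at hx'
  obtain ⟨k, hk⟩ := hx'
  refine ⟨k, ?_⟩
  have := congrArg Units.val hk
  simpa [Units.val_pow_eq_pow_val] using this.symm

lemma mem_range_of_pow_card_eq {K L : Type*} [Field K] [Field L] [Fintype K] [Fintype L]
    [Algebra K L] {q : ℕ} (hq2 : 2 ≤ q) (hK : Fintype.card K = q)
    {t : L} (ht : t ^ q = t) : ∃ z : K, algebraMap K L z = t := by
  classical
  by_contra hcon
  push_neg at hcon
  have hf : Function.Injective (algebraMap K L) := (algebraMap K L).injective
  set R : Finset L := Finset.univ.image (algebraMap K L) with hR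
  have hcardR : R.card = q := by
    rw [hR, Finset.card_image_of_injective _ hf, Finset.card_univ, hK]
  have htR : t ∉ R := by
    simp only [hR, Finset.mem_image]
    rintro ⟨z, -, hz⟩; exact hcon z hz
  set P : L[X] := X ^ q - X with hP
  have hdeg : P.natDegree = q := by
    rw [hP]
    have h1 : (X : L[X]).natDegree < ((X : L[X]) ^ q).natDegree := by
      rw [natDegree_X_pow, natDegree_X]; omega
    rw [natDegree_sub_eq_left_of_natDegree_lt h1, natDegree_X_pow]
  have hP0 : P ≠ 0 := fun h => by rw [h, natDegree_zero] at hdeg; omega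
  have hroot : insert t R ⊆ P.roots.toFinset := by
    intro x hx
    rw [Multiset.mem_toFinset, mem_roots hP0]
    rcases Finset.mem_insert.mp hx with rfl | hx
    · simp [hP, IsRoot, ht]
    · obtain ⟨z, -, rfl⟩ := Finset.mem_image.mp hx
      have : (algebraMap K L z) ^ q = algebraMap K L z := by
        rw [← map_pow, ← hK, FiniteField.pow_card]
      simp [hP, IsRoot, this]
  have hcard2 : (insert t R).card = q + 1 := by
    rw [Finset.card_insert_of_notMem htR, hcardR]
  have := (Finset.card_le_card hroot).trans
    ((Multiset.toFinset_card_le _).trans ((P.card_roots').trans_eq hdeg))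
  omega

abbrev nsqSet {L : Type*} [MonoidWithZero L] (c : L) : Set L :=
  {x | ∃ y, y ≠ 0 ∧ x = c * y ^ 2}

abbrev Tset {K L : Type*} [CommRing K] [CommRing L] [Algebra K L]
    (q : ℕ) (ω : L) (γ : K) (i : ℕ) : Set L :=
  {x : L | (∃ y : L, y ≠ 0 ∧ x = ω * y ^ 2) ∧
    ∃ z : K, (∃ w : K, w ≠ 0 ∧ z = γ ^ i * w ^ 2) ∧
      algebraMap K L z = x * ω ^ ((q + 1) / 2) + (x * ω ^ ((q + 1) / 2)) ^ q}

theorem stmt_10 (p r : ℕ) (hp : p.Prime) (hp4 : p % 4 = 1) (hr : 0 < r)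
    (K L : Type*) [Field K] [Field L] [Fintype K] [Fintype L] [Algebra K L]
    (q : ℕ) (hq : q = p ^ r)
    (hK : Fintype.card K = q) (hL : Fintype.card L = q ^ 2)
    (ω : L) (hω : orderOf ω = q ^ 2 - 1)
    (γ : K) (hγ : algebraMap K L γ = ω ^ (q + 1)) :
    ∀ i : Fin 2,
      Set.ncard {x : L | (∃ y : L, y ≠ 0 ∧ x = ω * y ^ 2) ∧
          ∃ z : K, (∃ w : K, w ≠ 0 ∧ z = γ ^ (i : ℕ) * w ^ 2) ∧
            algebraMap K L z
              = x * ω ^ ((q + 1) / 2) + (x * ω ^ ((q + 1) / 2)) ^ q}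
        = (q ^ 2 - 1) / 4 := by
  classical
  -- numeric facts
  have hp5 : 5 ≤ p := by have := hp.two_le; omega
  have hq5 : 5 ≤ q := by
    have h1 : p ≤ p ^ r := Nat.le_self_pow hr.ne' p
    omega
  have hq4 : q % 4 = 1 := by simp [hq, Nat.pow_mod, hp4]
  have hqq : 25 ≤ q ^ 2 := by nlinarith
  have hfac : (q + 1) * (q - 1) = q ^ 2 - 1 := by
    have h1 : 1 ≤ q := by omega
    have h2 : 1 ≤ q ^ 2 := by omega
    zify [h1, h2]; ring
  have hq2odd : q ^ 2 % 2 = 1 := by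
    have hqm2 : q % 2 = 1 := by omega
    simp [Nat.pow_mod, hqm2]
  have hcodd : (q + 1) / 2 % 2 = 1 := by omega
  -- basic facts about ω
  have hω1 : ω ^ (q ^ 2 - 1) = 1 := by rw [← hω]; exact pow_orderOf_eq_one ω
  have hω0 : ω ≠ 0 := by
    intro h
    rw [h, zero_pow (by omega : q ^ 2 - 1 ≠ 0)] at hω1
    exact one_ne_zero hω1.symm
  have hmod : ∀ a b : ℕ, ω ^ a = ω ^ b ↔ a ≡ b [MOD q ^ 2 - 1] := by
    intro a b
    have hou : orderOf (Units.mk0 ω hω0) = q ^ 2 - 1 := by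
      rw [← orderOf_units, Units.val_mk0, hω]
    have hiff : (Units.mk0 ω hω0) ^ a = (Units.mk0 ω hω0) ^ b ↔ ω ^ a = ω ^ b := by
      rw [Units.ext_iff]
      simp [Units.val_pow_eq_pow_val]
    rw [← hiff, pow_eq_pow_iff_modEq, hou]
  have hs1 : ω ^ ((q ^ 2 - 1) / 2) ≠ 1 := by
    intro h
    have hd := orderOf_dvd_of_pow_eq_one h
    rw [hω] at hd
    have := Nat.le_of_dvd (by omega) hd
    omega
  have hm1 : ω ^ ((q ^ 2 - 1) / 2) = -1 := by
    have hsq : (ω ^ ((q ^ 2 - 1) / 2)) ^ 2 = 1 := by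
      rw [← pow_mul, Nat.div_mul_cancel (by omega : 2 ∣ q ^ 2 - 1)]
      exact hω1
    have hfact : (ω ^ ((q ^ 2 - 1) / 2) - 1) * (ω ^ ((q ^ 2 - 1) / 2) + 1) = 0 := by
      linear_combination hsq
    rcases mul_eq_zero.mp hfact with h | h
    · exact absurd (sub_eq_zero.mp h) hs1
    · exact eq_neg_of_add_eq_zero_left h
  have hneg1 : (-1 : L) ≠ 1 := fun h => hs1 (hm1.trans h)
  have hgenL : ∀ x : L, x ≠ 0 → ∃ k : ℕ, x = ω ^ k := fun x hx =>
    gen_of_orderOf_eq (by rw [hω, hL]) hω0 hx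
  have hparity : ∀ a b : ℕ, ω ^ (2 * a) ≠ ω ^ (2 * b + 1) := by
    intro a b h
    have h2 := (hmod _ _).mp h
    have hN : (2:ℕ) ∣ q ^ 2 - 1 := by omega
    have h2' : (2:ℤ) ∣ ((2 * b + 1 : ℕ) : ℤ) - ((2 * a : ℕ) : ℤ) :=
      dvd_trans (by exact_mod_cast Int.natCast_dvd_natCast.mpr hN) h2.dvd
    obtain ⟨k, hk⟩ := h2'
    push_cast at hk
    omega
  -- membership in nsqSet ω via exponents
  have hAexp : ∀ x : L, x ∈ nsqSet ω → ∃ j : ℕ, x = ω ^ (2 * j + 1) := by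
    rintro x ⟨y, hy, rfl⟩
    obtain ⟨j, rfl⟩ := hgenL y hy
    exact ⟨j, by rw [← pow_mul, mul_comm j 2, ← pow_succ']⟩
  have hexpA : ∀ j : ℕ, ω ^ (2 * j + 1) ∈ nsqSet ω := fun j =>
    ⟨ω ^ j, pow_ne_zero _ hω0, by rw [← pow_mul, mul_comm j 2, ← pow_succ']⟩
  -- characteristic
  haveI : Fact p.Prime := ⟨hp⟩
  haveI hcharK : CharP K p := by
    have h1 := ringChar.charP K
    obtain ⟨m, hm, hcard⟩ := FiniteField.card K (ringChar K)
    have hd : ringChar K ∣ p ^ r := by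
      rw [← hq, ← hK, hcard]
      exact dvd_pow_self _ m.pos.ne'
    have hpr : ringChar K = p := (Nat.prime_dvd_prime_iff_eq hm hp).mp (hm.dvd_of_dvd_pow hd)
    rwa [hpr] at h1
  haveI hcharL : CharP L p := charP_of_injective_algebraMap (algebraMap K L).injective p
  have hLpow : ∀ x : L, x ^ q ^ 2 = x := by
    intro x; have := FiniteField.pow_card x; rwa [hL] at this
  have hKpow : ∀ z : K, z ^ q = z := by
    intro z; have := FiniteField.pow_card z; rwa [hK] at this
  have hfrob : ∀ a b : L, (a + b) ^ q = a ^ q + b ^ q := by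
    intro a b; rw [hq]; exact add_pow_char_pow a b p r
  -- γ facts
  have hγL0 : (ω : L) ^ (q + 1) ≠ 0 := pow_ne_zero _ hω0
  have hγ0 : γ ≠ 0 := by
    intro h; rw [h, map_zero] at hγ; exact hγL0 hγ.symm
  have hordγ : orderOf γ = q - 1 := by
    have h1 : orderOf (algebraMap K L γ) = orderOf γ :=
      orderOf_injective (algebraMap K L : K →* L) (algebraMap K L).injective γ
    rw [hγ] at h1
    rw [← h1, orderOf_pow' ω (by omega : q + 1 ≠ 0), hω,
      Nat.gcd_eq_right ⟨q - 1, hfac.symm⟩, ← hfac,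
      Nat.mul_div_cancel_left _ (by omega : 0 < q + 1)]
  have hKgen : ∀ z : K, z ≠ 0 → ∃ m : ℕ, z = γ ^ m := fun z hz =>
    gen_of_orderOf_eq (by rw [hordγ, hK]) hγ0 hz
  have hγnsq : ∀ u : K, u ≠ 0 → γ ≠ u ^ 2 := by
    intro u hu h
    have h2 : 2 * ((q - 1) / 2) = q - 1 := by omega
    have h1 : γ ^ ((q - 1) / 2) = 1 := by
      rw [h, ← pow_mul, h2]
      have := FiniteField.pow_card_sub_one_eq_one u hu
      rwa [hK] at this
    have hd := orderOf_dvd_of_pow_eq_one h1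
    rw [hordγ] at hd
    have := Nat.le_of_dvd (by omega) hd
    omega
  -- trace-type computations
  have hgscal : ∀ u x : L, u ^ q = u →
      (u * x) * ω ^ ((q + 1) / 2) + ((u * x) * ω ^ ((q + 1) / 2)) ^ q
        = u * (x * ω ^ ((q + 1) / 2) + (x * ω ^ ((q + 1) / 2)) ^ q) := by
    intro u x hu
    have h1 : ((u * x) * ω ^ ((q + 1) / 2)) ^ q = u ^ q * (x * ω ^ ((q + 1) / 2)) ^ q := by
      rw [mul_assoc, mul_pow]
    rw [h1, hu]; ring
  have htr : ∀ x : L,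
      (x * ω ^ ((q + 1) / 2) + (x * ω ^ ((q + 1) / 2)) ^ q) ^ q
        = x * ω ^ ((q + 1) / 2) + (x * ω ^ ((q + 1) / 2)) ^ q := by
    intro x
    rw [hfrob, ← pow_mul, ← pow_two, hLpow]
    exact add_comm _ _
  have hγLq : (algebraMap K L γ) ^ q = algebraMap K L γ := by
    rw [← map_pow, hKpow]
  have hchalf : (ω ^ ((q + 1) / 2)) ^ 2 = ω ^ (q + 1) := by
    rw [← pow_mul]; congr 1; omega
  -- T i ⊆ nsqSet, disjointness, union
  have hdisjT : ∀ x : L, x ∈ Tset q ω γ 0 → x ∈ Tset q ω γ 1 → False := by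
    rintro x ⟨-, z0, ⟨w, hw, rfl⟩, he0⟩ ⟨-, z1, ⟨v, hv, rfl⟩, he1⟩
    have hz : γ ^ 0 * w ^ 2 = γ ^ 1 * v ^ 2 :=
      (algebraMap K L).injective (he0.trans he1.symm)
    rw [pow_zero, one_mul, pow_one] at hz
    refine hγnsq (w * v⁻¹) (mul_ne_zero hw (inv_ne_zero hv)) ?_
    have : (w * v⁻¹) ^ 2 = γ := by
      rw [mul_pow, hz]; field_simp
    exact this.symm
  have hunionT : ∀ x : L, x ∈ nsqSet ω → x ∈ Tset q ω γ 0 ∨ x ∈ Tset q ω γ 1 := by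
    intro x hxA
    obtain ⟨j, hj⟩ := hAexp x hxA
    obtain ⟨z, hz⟩ := mem_range_of_pow_card_eq (by omega) hK (htr x)
    have hx0 : x ≠ 0 := by rw [hj]; exact pow_ne_zero _ hω0
    have hz0 : z ≠ 0 := by
      rintro rfl
      rw [map_zero] at hz
      have hs0 : x * ω ^ ((q + 1) / 2) ≠ 0 := mul_ne_zero hx0 (pow_ne_zero _ hω0)
      have hq1 : (x * ω ^ ((q + 1) / 2)) ^ (q - 1) = -1 := by
        have h2 : (x * ω ^ ((q + 1) / 2)) ^ (q - 1) * (x * ω ^ ((q + 1) / 2))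
            = (-1) * (x * ω ^ ((q + 1) / 2)) := by
          rw [← pow_succ]
          have h3 : q - 1 + 1 = q := by omega
          rw [h3]
          linear_combination -hz
        exact mul_right_cancel₀ hs0 h2
      have hnd : (q ^ 2 - 1) / 2 = (q - 1) * ((q + 1) / 2) := by
        rw [← Nat.mul_div_assoc _ (by omega : (2:ℕ) ∣ q + 1), mul_comm (q - 1), hfac]
      have hsn : (x * ω ^ ((q + 1) / 2)) ^ ((q ^ 2 - 1) / 2) = -1 := by
        rw [hnd, pow_mul, hq1]
        exact Odd.neg_one_pow (Nat.odd_iff.mpr hcodd)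
      obtain ⟨m, hm⟩ : ∃ m, 2 * j + 1 + (q + 1) / 2 = 2 * m :=
        ⟨(2 * j + 1 + (q + 1) / 2) / 2, by omega⟩
      have hse : x * ω ^ ((q + 1) / 2) = ω ^ (2 * m) := by
        rw [hj, ← pow_add, hm]
      have hone : (x * ω ^ ((q + 1) / 2)) ^ ((q ^ 2 - 1) / 2) = 1 := by
        rw [hse, ← pow_mul]
        have h5 : 2 * (( q ^ 2 - 1) / 2) = q ^ 2 - 1 := by omega
        have h6 : 2 * m * ((q ^ 2 - 1) / 2) = (q ^ 2 - 1) * m := by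
          calc 2 * m * ((q ^ 2 - 1) / 2) = m * (2 * ((q ^ 2 - 1) / 2)) := by ring
            _ = m * (q ^ 2 - 1) := by rw [h5]
            _ = (q ^ 2 - 1) * m := mul_comm _ _
        rw [h6, pow_mul, hω1, one_pow]
      exact hneg1 (hsn.symm.trans hone)
    obtain ⟨m, rfl⟩ := hKgen z hz0
    rcases Nat.even_or_odd m with ⟨u, hu⟩ | ⟨u, hu⟩
    · left
      refine ⟨hxA, γ ^ m, ⟨γ ^ u, pow_ne_zero _ hγ0, ?_⟩, hz⟩
      rw [pow_zero, one_mul, ← pow_mul]; congr 1; omega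
    · right
      refine ⟨hxA, γ ^ m, ⟨γ ^ u, pow_ne_zero _ hγ0, ?_⟩, hz⟩
      rw [pow_one, ← pow_mul, ← pow_succ']; congr 1; omega
  -- multiplication by ω^(q+1) maps T 0 onto T 1
  have himg : (fun x : L => ω ^ (q + 1) * x) '' (Tset q ω γ 0) = Tset q ω γ 1 := by
    ext x
    constructor
    · rintro ⟨x0, ⟨⟨y, hy, rfl⟩, z, ⟨w, hw, rfl⟩, hze⟩, rfl⟩
      constructor
      · refine ⟨ω ^ ((q + 1) / 2) * y, mul_ne_zero (pow_ne_zero _ hω0) hy, ?_⟩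
        rw [mul_pow, hchalf]; ring
      · refine ⟨γ * (γ ^ 0 * w ^ 2), ⟨w, hw, by rw [pow_one, pow_zero, one_mul]⟩, ?_⟩
        rw [map_mul, hγ, hze, ← hgscal _ _ (by rw [← hγ]; exact hγLq)]
    · rintro ⟨⟨y, hy, hxy⟩, z, ⟨v, hv, rfl⟩, hze⟩
      refine ⟨(ω ^ (q + 1))⁻¹ * x, ⟨?_, ?_⟩, ?_⟩
      · refine ⟨(ω ^ ((q + 1) / 2))⁻¹ * y,
          mul_ne_zero (inv_ne_zero (pow_ne_zero _ hω0)) hy, ?_⟩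
        rw [hxy, mul_pow, inv_pow, hchalf]; ring
      · refine ⟨γ ^ 0 * v ^ 2, ⟨v, hv, rfl⟩, ?_⟩
        have hu : ((ω ^ (q + 1))⁻¹) ^ q = (ω ^ (q + 1))⁻¹ := by
          rw [inv_pow, ← hγ, hγLq]
        rw [hgscal _ _ hu, ← hze, map_mul, map_mul, pow_zero, pow_one, map_one,
          one_mul, hγ, inv_mul_cancel_left₀ hγL0]
      · exact mul_inv_cancel_left₀ hγL0 x
  -- multiplication by ω maps squares onto nonsquares
  have himg2 : (fun x : L => ω * x) '' (nsqSet (1 : L)) = nsqSet ω := by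
    ext x
    constructor
    · rintro ⟨x0, ⟨y, hy, rfl⟩, rfl⟩
      exact ⟨y, hy, by rw [one_mul]⟩
    · rintro ⟨y, hy, rfl⟩
      exact ⟨1 * y ^ 2, ⟨y, hy, rfl⟩, by rw [one_mul]⟩
  have hdisj2 : ∀ x : L, x ∈ nsqSet (1 : L) → x ∈ nsqSet ω → False := by
    rintro x ⟨y, hy, rfl⟩ hA'
    obtain ⟨j, hj⟩ := hAexp _ hA'
    obtain ⟨a, rfl⟩ := hgenL y hy
    rw [one_mul, ← pow_mul, mul_comm a 2] at hj
    exact hparity a j hj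
  have hcover : ∀ x : L, x ≠ 0 → x ∈ nsqSet (1 : L) ∨ x ∈ nsqSet ω := by
    intro x hx
    obtain ⟨k, rfl⟩ := hgenL x hx
    rcases Nat.even_or_odd k with ⟨u, hu⟩ | ⟨u, hu⟩
    · left
      refine ⟨ω ^ u, pow_ne_zero _ hω0, ?_⟩
      rw [one_mul, ← pow_mul]; congr 1; omega
    · right
      rw [hu]; exact hexpA u
  -- cardinalities
  have hinj1 : Function.Injective (fun x : L => ω ^ (q + 1) * x) :=
    fun a b h => mul_left_cancel₀ hγL0 h
  have hinj2 : Function.Injective (fun x : L => ω * x) :=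
    fun a b h => mul_left_cancel₀ hω0 h
  have hcard1 : (Tset q ω γ 1).ncard = (Tset q ω γ 0).ncard := by
    rw [← himg, Set.ncard_image_of_injective _ hinj1]
  have hcardA : (nsqSet (1 : L)).ncard = (nsqSet ω).ncard := by
    rw [← himg2, Set.ncard_image_of_injective _ hinj2]
  have hsplit : (nsqSet ω).ncard = (Tset q ω γ 0).ncard + (Tset q ω γ 1).ncard := by
    have hu : Tset q ω γ 0 ∪ Tset q ω γ 1 = nsqSet ω := by
      apply Set.Subset.antisymm
      · rintro x (hx | hx)
        exacts [hx.1, hx.1]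
      · intro x hx
        exact hunionT x hx
    rw [← hu, Set.ncard_union_eq (Set.disjoint_left.mpr fun x h0 h1 => hdisjT x h0 h1)
      (Set.toFinite _) (Set.toFinite _)]
  have h0Sq : (0 : L) ∉ nsqSet (1 : L) ∪ nsqSet ω := by
    rintro (⟨y, hy, h⟩ | hxA)
    · rw [one_mul] at h
      exact hy (by simpa [pow_eq_zero_iff] using h.symm)
    · obtain ⟨j, hj⟩ := hAexp _ hxA
      exact (pow_ne_zero _ hω0) hj.symm
  have htot : (nsqSet (1 : L)).ncard + (nsqSet ω).ncard + 1 = q ^ 2 := by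
    have huniv : nsqSet (1 : L) ∪ nsqSet ω ∪ {0} = (Set.univ : Set L) := by
      ext x
      simp only [Set.mem_union, Set.mem_singleton_iff, Set.mem_univ, iff_true]
      by_cases hx : x = 0
      · right; exact hx
      · left; exact hcover x hx
    calc (nsqSet (1 : L)).ncard + (nsqSet ω).ncard + 1
        = (nsqSet (1 : L) ∪ nsqSet ω).ncard + ({0} : Set L).ncard := by
          rw [Set.ncard_union_eq (Set.disjoint_left.mpr fun x h0 h1 => hdisj2 x h0 h1)
            (Set.toFinite _) (Set.toFinite _), Set.ncard_singleton]
      _ = (nsqSet (1 : L) ∪ nsqSet ω ∪ {0}).ncard := by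
          have hd0 : Disjoint (nsqSet (1 : L) ∪ nsqSet ω) ({0} : Set L) :=
            Set.disjoint_singleton_right.mpr h0Sq
          rw [Set.ncard_union_eq hd0 (Set.toFinite _) (Set.toFinite _)]
      _ = (Set.univ : Set L).ncard := by rw [huniv]
      _ = q ^ 2 := by rw [Set.ncard_univ, Nat.card_eq_fintype_card, hL]
  have h4 : 4 * (Tset q ω γ 0).ncard + 1 = q ^ 2 := by omega
  intro i
  have hilt := i.isLt
  have hi : (i : ℕ) = 0 ∨ (i : ℕ) = 1 := by omega
  rcases hi with hi | hi <;> rw [hi]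
  · show (Tset q ω γ 0).ncard = (q ^ 2 - 1) / 4
    omega
  · show (Tset q ω γ 1).ncard = (q ^ 2 - 1) / 4
    omega
end

section
/- With the notation of the context, there exist h ∈ {0,1,2,3} and an integer ℓ not divisible by q+1 such that χ₄'(n) = i^{(−εδ+1)/2 + h} and χ₄'(n − t²/4) = −i^{ε + 2h}, where n = ω^{ℓ(q+1)} and t = ω^ℓ + ω^{ℓq}. -/
/-- With `q = p^r = 4m² + 1` (`p ≡ 1 (mod 4)` prime), `ω` a
primitive element of `F_{q²}`, `γ = ω^{q+1}` primitive in `F_q`, characters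
`χ₄, χ₄'` with `χ₄(ω) = i = χ₄'(γ)`, `η = (χ₄')²` and `J(η, χ₄') = ε + 2mδ·i`,
there exist `h ∈ {0,1,2,3}` and an integer `ℓ` not divisible by `q + 1` such
that `χ₄'(n) = i^{(−εδ+1)/2 + h}` and `χ₄'(n − t²/4) = −i^{ε+2h}`, where
`n = ω^{ℓ(q+1)}` and `t = ω^ℓ + ω^{ℓq}`. -/
theorem stmt_11 (p r m : ℕ) (hp : p.Prime) (hp4 : p % 4 = 1) (hr : 0 < r)
    (hm : 0 < m)
    (K L : Type*) [Field K] [Field L] [Fintype K] [Fintype L] [Algebra K L]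
    (hK : Fintype.card K = p ^ r) (hKm : Fintype.card K = 4 * m ^ 2 + 1)
    (hL : Fintype.card L = (p ^ r) ^ 2)
    (ω : L) (hω : orderOf ω = (p ^ r) ^ 2 - 1)
    (γ : K) (hγ : algebraMap K L γ = ω ^ (p ^ r + 1)) (hγprim : orderOf γ = p ^ r - 1)
    (χ₄ : MulChar L ℂ) (hχ₄ : χ₄ ω = Complex.I)
    (χ₄' : MulChar K ℂ) (hχ₄' : χ₄' γ = Complex.I)
    (ε δ : ℤ) (hε : ε = 1 ∨ ε = -1) (hδ : δ = 1 ∨ δ = -1)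
    (hJ : ∑ x : K, (χ₄' ^ 2) x * χ₄' (1 - x)
        = (ε : ℂ) + 2 * (m : ℂ) * (δ : ℂ) * Complex.I) :
    ∃ h ∈ ({0, 1, 2, 3} : Set ℤ), ∃ ℓ : ℤ, ¬ ((p ^ r : ℤ) + 1 ∣ ℓ) ∧
      ∃ n t : K,
        algebraMap K L n = ω ^ (ℓ * ((p ^ r : ℤ) + 1)) ∧
        algebraMap K L t = ω ^ ℓ + ω ^ (ℓ * (p ^ r : ℤ)) ∧
        χ₄' n = Complex.I ^ ((-(ε * δ) + 1) / 2 + h) ∧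
        χ₄' (n - t ^ 2 / 4) = -Complex.I ^ (ε + 2 * h) := by
  classical
  clear hJ hχ₄
  have hfact : Fact p.Prime := ⟨hp⟩
  set q : ℕ := p ^ r with hqdef
  have hq4 : q = 4 * m ^ 2 + 1 := by rw [← hK, hKm]
  have hp5 : 5 ≤ p := by have := hp.two_le; omega
  have hq5 : 5 ≤ q := le_trans hp5 (by calc p = p ^ 1 := (pow_one p).symm
                                          _ ≤ p ^ r := Nat.pow_le_pow_right (by omega) hr)
  have hq2 : 25 ≤ q ^ 2 := by nlinarith
  -- characteristic of L
  have hchL : ringChar L = p := by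
    have hdvd : ringChar L ∣ q ^ 2 := by
      apply ringChar.dvd
      rw [← hL]; exact FiniteField.cast_card_eq_zero L
    rcases CharP.char_is_prime_or_zero L (ringChar L) with hpr | h0
    · have : ringChar L ∣ p := hpr.dvd_of_dvd_pow (by
        have : q ^ 2 = p ^ (r * 2) := by rw [hqdef, ← pow_mul]
        rwa [this] at hdvd)
      exact (Nat.prime_dvd_prime_iff_eq hpr hp).mp this
    · rw [h0] at hdvd
      have := Nat.eq_zero_of_zero_dvd hdvd
      omega
  have hcharL : CharP L p := hchL ▸ ringChar.charP L
  have h2K : (2 : K) ≠ 0 := by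
    intro h2
    have hc : ((Fintype.card K : ℕ) : K) = 0 := FiniteField.cast_card_eq_zero K
    rw [hKm] at hc
    push_cast at hc
    have h4 : (4 : K) = 2 * 2 := by norm_num
    rw [h4, h2, zero_mul, zero_mul, zero_add] at hc
    exact one_ne_zero hc
  have h4K : (4 : K) ≠ 0 := by
    intro h
    apply h2K
    have h4 : (4 : K) = 2 * 2 := by norm_num
    rw [h4] at h
    exact mul_self_eq_zero.mp h
  have h2L : (2 : L) ≠ 0 := by
    have : ((2 : ℕ) : L) ≠ 0 := by
      rw [Ne, CharP.cast_eq_zero_iff L p 2]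
      intro hdvd
      have := Nat.le_of_dvd (by norm_num) hdvd
      omega
    simpa using this
  -- basic powers of ω and γ
  have hωcard : ω ^ (q ^ 2 - 1) = 1 := by
    have := pow_orderOf_eq_one ω; rwa [hω] at this
  have hω0 : ω ≠ 0 := by
    intro h
    rw [h, zero_pow (Nat.sub_ne_zero_of_lt (by nlinarith : 1 < q ^ 2))] at hωcard
    exact zero_ne_one hωcard
  have hωQ2 : ω ^ (q ^ 2) = ω := by
    have h : q ^ 2 = (q ^ 2 - 1) + 1 := by omega
    rw [h, pow_succ, hωcard, one_mul]
  have hωfrob : ω ^ q ≠ ω := by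
    intro h
    have h1 : ω ^ (q - 1) * ω = 1 * ω := by
      rw [← pow_succ, (by omega : q - 1 + 1 = q), h, one_mul]
    have h2 : ω ^ (q - 1) = 1 := mul_right_cancel₀ hω0 h1
    have h3 := orderOf_dvd_of_pow_eq_one h2
    rw [hω] at h3
    have h4 := Nat.le_of_dvd (by omega) h3
    have h5 : q ^ 2 ≤ q := by omega
    rw [pow_two] at h5
    have h7 : q ≤ 1 := Nat.le_of_mul_le_mul_left (by simpa using h5) (by omega)
    omega
  have hγq1 : γ ^ (q - 1) = 1 := by
    have := pow_orderOf_eq_one γ; rwa [hγprim] at this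
  have hγ0 : γ ≠ 0 := by
    intro h
    rw [h, zero_pow (by omega : q - 1 ≠ 0)] at hγq1
    exact zero_ne_one hγq1
  -- γ generates Kˣ
  have hγgen : ∀ x : K, x ≠ 0 → ∃ k : ℕ, γ ^ k = x := by
    intro x hx
    have h1 : orderOf (Units.mk0 γ hγ0) = Fintype.card Kˣ := by
      rw [← orderOf_units, Units.val_mk0, hγprim, Fintype.card_units, hK]
    have htop : Subgroup.zpowers (Units.mk0 γ hγ0) = ⊤ := by
      apply Subgroup.eq_top_of_card_eq
      rw [Nat.card_zpowers, h1, Nat.card_eq_fintype_card]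
    have hmem : Units.mk0 x hx ∈ Subgroup.zpowers (Units.mk0 γ hγ0) := by
      rw [htop]; exact Subgroup.mem_top _
    rw [← mem_powers_iff_mem_zpowers, Submonoid.mem_powers_iff] at hmem
    obtain ⟨k, hk⟩ := hmem
    refine ⟨k, ?_⟩
    have := congrArg Units.val hk
    simpa using this
  -- elements of L fixed by x ↦ x^q come from K
  have hfix : ∀ z : L, z ^ q = z → ∃ a : K, algebraMap K L a = z := by
    intro z hz
    have hinj : Function.Injective (algebraMap K L) := (algebraMap K L).injective
    set S : Finset L := Finset.univ.image (algebraMap K L) with hS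
    have hcardS : S.card = q := by
      rw [hS, Finset.card_image_of_injective _ hinj, Finset.card_univ, hK]
    set f : Polynomial L := Polynomial.X ^ q - Polynomial.X with hf
    have hdeg : f.natDegree = q := by
      rw [hf, Polynomial.natDegree_sub_eq_left_of_natDegree_lt, Polynomial.natDegree_X_pow]
      rw [Polynomial.natDegree_X, Polynomial.natDegree_X_pow]
      omega
    have hfne : f ≠ 0 := by
      intro h0
      rw [h0, Polynomial.natDegree_zero] at hdeg
      omega
    have hroots : S ⊆ f.roots.toFinset := by
      intro x hx
      rw [hS, Finset.mem_image] at hx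
      obtain ⟨a, -, rfl⟩ := hx
      rw [Multiset.mem_toFinset, Polynomial.mem_roots hfne]
      show f.IsRoot _
      rw [Polynomial.IsRoot, hf]
      simp only [Polynomial.eval_sub, Polynomial.eval_pow, Polynomial.eval_X]
      rw [← map_pow, ← hK, FiniteField.pow_card, sub_self]
    have hle : f.roots.toFinset.card ≤ q :=
      le_trans (Multiset.toFinset_card_le _) (le_trans (Polynomial.card_roots' f) hdeg.le)
    have hSeq : S = f.roots.toFinset :=
      Finset.eq_of_subset_of_card_le hroots (by rw [hcardS]; exact hle)
    have hzmem : z ∈ f.roots.toFinset := by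
      rw [Multiset.mem_toFinset, Polynomial.mem_roots hfne]
      show f.IsRoot z
      rw [Polynomial.IsRoot, hf]
      simp only [Polynomial.eval_sub, Polynomial.eval_pow, Polynomial.eval_X]
      rw [hz, sub_self]
    rw [← hSeq, hS, Finset.mem_image] at hzmem
    obtain ⟨a, -, ha⟩ := hzmem
    exact ⟨a, ha⟩
  -- the element t₁ with image ω + ω^q
  obtain ⟨t₁, ht₁⟩ := hfix (ω + ω ^ q) (by
    show (ω + ω ^ q) ^ (p ^ r) = ω + ω ^ q
    rw [add_pow_char_pow]
    rw [← hqdef, ← pow_mul, (by ring : q * q = q ^ 2), hωQ2]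
    exact add_comm _ _)
  -- the key nonsquare d
  set d : K := γ - t₁ ^ 2 / 4 with hd
  have hdnsq : ∀ e : K, e ^ 2 ≠ d := by
    intro e he
    obtain ⟨c, hc⟩ : IsSquare (-1 : K) := by
      rw [FiniteField.isSquare_neg_one_iff, hKm]
      omega
    have hc0 : c ≠ 0 := by
      intro h
      rw [h, mul_zero] at hc
      exact (by norm_num : (-1 : K) ≠ 0) hc
    set s : L := ω - ω ^ q with hs
    have hs0 : s ≠ 0 := sub_ne_zero.mpr (Ne.symm hωfrob)
    have h4L : (4 : L) ≠ 0 := by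
      intro h
      apply h2L
      have h4 : (4 : L) = 2 * 2 := by norm_num
      rw [h4] at h
      exact mul_self_eq_zero.mp h
    have hφd : (algebraMap K L) d * 4 = -(s ^ 2) := by
      have hEq : (algebraMap K L) d
          = (algebraMap K L) γ - (algebraMap K L) t₁ ^ 2 / 4 := by
        rw [hd, map_sub, map_div₀, map_pow, map_ofNat]
      rw [hEq, hγ, ht₁, hs]
      field_simp
      ring
    have hsq : s ^ q = -s := by
      rw [hs]
      show (ω - ω ^ q) ^ (p ^ r) = -(ω - ω ^ q)
      rw [sub_pow_char_pow]
      rw [← hqdef, ← pow_mul, (by ring : q * q = q ^ 2), hωQ2]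
      ring
    have hcontr : ∀ a : K, s ≠ algebraMap K L a := by
      intro a ha
      have h1 : s ^ q = s := by
        rw [ha, ← map_pow, ← hK, FiniteField.pow_card]
      rw [hsq] at h1
      have h2 : (2 : L) * s = 0 := by linear_combination -h1
      rcases mul_eq_zero.mp h2 with h | h
      · exact h2L h
      · exact hs0 h
    have hφc : algebraMap K L c ≠ 0 := fun h => hc0 ((map_eq_zero (algebraMap K L)).mp h)
    have hcc : algebraMap K L c * algebraMap K L c = -1 := by
      rw [← map_mul, ← hc, map_neg, map_one]
    have key : (2 * algebraMap K L e - algebraMap K L c * s)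
        * (2 * algebraMap K L e + algebraMap K L c * s) = 0 := by
      have h1 : algebraMap K L e ^ 2 * 4 = -(s ^ 2) := by
        rw [← map_pow, he]; exact hφd
      linear_combination h1 - s ^ 2 * hcc
    rcases mul_eq_zero.mp key with h0 | h0
    · apply hcontr (c⁻¹ * (2 * e))
      rw [map_mul, map_inv₀, map_mul, map_ofNat]
      field_simp
      linear_combination -h0
    · apply hcontr (-(c⁻¹ * (2 * e)))
      rw [map_neg, map_mul, map_inv₀, map_mul, map_ofNat]
      field_simp
      linear_combination h0
  have hd0 : d ≠ 0 := by
    intro h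
    exact hdnsq 0 (by rw [h]; norm_num)
  obtain ⟨k, hk⟩ := hγgen d hd0
  have hkodd : Odd k := by
    rcases Nat.even_or_odd k with heven | hodd
    · obtain ⟨j, hj⟩ := heven
      exact absurd (by rw [← hk, hj, pow_add, sq]) (hdnsq (γ ^ j))
    · exact hodd
  have hA2 : χ₄' d = Complex.I ∨ χ₄' d = -Complex.I := by
    have hAval : χ₄' d = Complex.I ^ k := by rw [← hk, map_pow, hχ₄']
    have h2 : (χ₄' d) ^ 2 = -1 := by
      rw [hAval, ← pow_mul, mul_comm, pow_mul, Complex.I_sq, hkodd.neg_one_pow]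
    have h3 : (χ₄' d - Complex.I) * (χ₄' d + Complex.I) = 0 := by
      linear_combination h2 - Complex.I_sq
    rcases mul_eq_zero.mp h3 with h | h
    · left; exact sub_eq_zero.mp h
    · right; exact eq_neg_of_add_eq_zero_left h
  -- cast helpers
  have hcastq : ((q : ℕ) : ℤ) = (p : ℤ) ^ r := by rw [hqdef]; push_cast; ring
  have hq5' : (5 : ℤ) ≤ (p : ℤ) ^ r := by
    rw [← hcastq]; exact_mod_cast hq5
  have hndvd1 : ¬ ((p : ℤ) ^ r + 1 ∣ (1 : ℤ)) := by
    intro hdvd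
    have := Int.le_of_dvd one_pos hdvd
    linarith
  have hndvd2 : ¬ ((p : ℤ) ^ r + 1 ∣ ((q : ℤ) + 2)) := by
    intro hdvd
    have h1 : (p : ℤ) ^ r + 1 ∣ ((q : ℤ) + 2) - ((p : ℤ) ^ r + 1) := dvd_sub hdvd dvd_rfl
    have h2 : ((q : ℤ) + 2) - ((p : ℤ) ^ r + 1) = 1 := by rw [← hcastq]; ring
    rw [h2] at h1
    have := Int.le_of_dvd one_pos h1
    linarith
  -- algebra map equalities
  have hEqn1 : algebraMap K L γ = ω ^ ((1 : ℤ) * ((p : ℤ) ^ r + 1)) := by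
    have h1 : (1 : ℤ) * ((p : ℤ) ^ r + 1) = ((q + 1 : ℕ) : ℤ) := by
      rw [← hcastq]; push_cast; ring
    rw [h1, zpow_natCast, hγ]
  have hEqt1 : algebraMap K L t₁ = ω ^ (1 : ℤ) + ω ^ ((1 : ℤ) * (p : ℤ) ^ r) := by
    have h1 : (1 : ℤ) * (p : ℤ) ^ r = ((q : ℕ) : ℤ) := by rw [← hcastq]; ring
    rw [h1, zpow_one, zpow_natCast, ht₁]
  have hγ3 : algebraMap K L (γ ^ 3) = ω ^ (((q : ℤ) + 2) * ((p : ℤ) ^ r + 1)) := by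
    have h1 : ((q : ℤ) + 2) * ((p : ℤ) ^ r + 1) = (((q + 2) * (q + 1) : ℕ) : ℤ) := by
      rw [← hcastq]; push_cast; ring
    rw [h1, zpow_natCast, map_pow, hγ, ← pow_mul]
    rw [(by ring : (q + 2) * (q + 1) = q ^ 2 + (3 * q + 2))]
    rw [pow_add, hωQ2]
    rw [(by ring : (q + 1) * 3 = 1 + (3 * q + 2)), pow_add, pow_one]
  have hEqt2 : algebraMap K L (γ * t₁) = ω ^ ((q : ℤ) + 2) + ω ^ (((q : ℤ) + 2) * (p : ℤ) ^ r) := by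
    have h1 : ((q : ℤ) + 2) = ((q + 2 : ℕ) : ℤ) := by push_cast; ring
    have h2 : ((q : ℤ) + 2) * (p : ℤ) ^ r = (((q + 2) * q : ℕ) : ℤ) := by
      rw [← hcastq]; push_cast; ring
    have hpow : ω ^ ((q + 2) * q) = ω ^ (2 * q + 1) := by
      rw [(by ring : (q + 2) * q = q ^ 2 + 2 * q), pow_add, hωQ2, ← pow_succ']
    rw [h2, h1, zpow_natCast, zpow_natCast, hpow, map_mul, hγ, ht₁]
    ring
  have hγ3val : γ ^ (q + 2) = γ ^ 3 := by
    have h1 : q + 2 = (q - 1) + 3 := by omega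
    rw [h1, pow_add, hγq1, one_mul]
  -- character values
  have hχγ3 : χ₄' (γ ^ 3) = -Complex.I := by
    rw [map_pow, hχ₄']
    simp [pow_succ, Complex.I_sq]
  have hsplit2 : γ ^ 3 - (γ * t₁) ^ 2 / 4 = γ ^ 2 * d := by
    rw [hd]; field_simp
  have hχd2 : χ₄' (γ ^ 3 - (γ * t₁) ^ 2 / 4) = - χ₄' d := by
    rw [hsplit2, map_mul, map_pow, hχ₄', Complex.I_sq, neg_one_mul]
  -- two "case" constructors
  have CASE1 : ∀ h : ℤ, h ∈ ({0, 1, 2, 3} : Set ℤ) →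
      Complex.I = Complex.I ^ ((-(ε * δ) + 1) / 2 + h) →
      χ₄' d = -Complex.I ^ (ε + 2 * h) →
      ∃ h ∈ ({0, 1, 2, 3} : Set ℤ), ∃ ℓ : ℤ, ¬ ((p : ℤ) ^ r + 1 ∣ ℓ) ∧
        ∃ n t : K,
          algebraMap K L n = ω ^ (ℓ * ((p : ℤ) ^ r + 1)) ∧
          algebraMap K L t = ω ^ ℓ + ω ^ (ℓ * (p : ℤ) ^ r) ∧
          χ₄' n = Complex.I ^ ((-(ε * δ) + 1) / 2 + h) ∧
          χ₄' (n - t ^ 2 / 4) = -Complex.I ^ (ε + 2 * h) := by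
    intro h hh e1 e2
    refine ⟨h, hh, 1, hndvd1, γ, t₁, hEqn1, hEqt1, ?_, ?_⟩
    · rw [hχ₄']; exact e1
    · rw [← hd]; exact e2
  have CASE2 : ∀ h : ℤ, h ∈ ({0, 1, 2, 3} : Set ℤ) →
      -Complex.I = Complex.I ^ ((-(ε * δ) + 1) / 2 + h) →
      -χ₄' d = -Complex.I ^ (ε + 2 * h) →
      ∃ h ∈ ({0, 1, 2, 3} : Set ℤ), ∃ ℓ : ℤ, ¬ ((p : ℤ) ^ r + 1 ∣ ℓ) ∧
        ∃ n t : K,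
          algebraMap K L n = ω ^ (ℓ * ((p : ℤ) ^ r + 1)) ∧
          algebraMap K L t = ω ^ ℓ + ω ^ (ℓ * (p : ℤ) ^ r) ∧
          χ₄' n = Complex.I ^ ((-(ε * δ) + 1) / 2 + h) ∧
          χ₄' (n - t ^ 2 / 4) = -Complex.I ^ (ε + 2 * h) := by
    intro h hh e1 e2
    refine ⟨h, hh, (q : ℤ) + 2, hndvd2, γ ^ 3, γ * t₁, hγ3, hEqt2, ?_, ?_⟩
    · rw [hχγ3]; exact e1
    · rw [hχd2]; exact e2
  -- small integer powers of I
  have hIn : ∀ j : ℕ, Complex.I ^ ((j : ℕ) : ℤ) = Complex.I ^ j := fun j => zpow_natCast _ j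
  have hI1 : Complex.I ^ (1 : ℤ) = Complex.I := zpow_one _
  have hI3 : Complex.I ^ (3 : ℤ) = -Complex.I := by
    rw [(by norm_num : (3 : ℤ) = ((3 : ℕ) : ℤ)), hIn]
    simp [pow_succ, Complex.I_sq]
  have hI5 : Complex.I ^ (5 : ℤ) = Complex.I := by
    rw [(by norm_num : (5 : ℤ) = ((5 : ℕ) : ℤ)), hIn]
    simp [pow_succ, Complex.I_sq]
  have hI7 : Complex.I ^ (7 : ℤ) = -Complex.I := by
    rw [(by norm_num : (7 : ℤ) = ((7 : ℕ) : ℤ)), hIn]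
    simp [pow_succ, Complex.I_sq]
  have hIm1 : Complex.I ^ (-1 : ℤ) = -Complex.I := by
    rw [zpow_neg, zpow_one, Complex.inv_I]
  rcases hε with rfl | rfl <;> rcases hδ with rfl | rfl <;> rcases hA2 with hA | hA
  · -- ε = 1, δ = 1, A = I : case 1, h = 1
    exact CASE1 1 (by norm_num) (by norm_num [hI1]) (by rw [hA]; norm_num [hI3])
  · -- ε = 1, δ = 1, A = -I : case 2, h = 3
    exact CASE2 3 (by norm_num) (by norm_num [hI3]) (by rw [hA]; norm_num [hI7])
  · -- ε = 1, δ = -1, A = I : case 2, h = 2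
    exact CASE2 2 (by norm_num) (by norm_num [hI3]) (by rw [hA]; norm_num [hI5])
  · -- ε = 1, δ = -1, A = -I : case 1, h = 0
    exact CASE1 0 (by norm_num) (by norm_num [hI1]) (by rw [hA]; norm_num [hI1])
  · -- ε = -1, δ = 1, A = I : case 1, h = 0
    exact CASE1 0 (by norm_num) (by norm_num [hI1]) (by rw [hA]; norm_num [hIm1])
  · -- ε = -1, δ = 1, A = -I : case 2, h = 2
    exact CASE2 2 (by norm_num) (by norm_num [hI3]) (by rw [hA]; norm_num [hI3])
  · -- ε = -1, δ = -1, A = I : case 2, h = 3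
    exact CASE2 3 (by norm_num) (by norm_num [hI3]) (by rw [hA]; norm_num [hI5])
  · -- ε = -1, δ = -1, A = -I : case 1, h = 1
    exact CASE1 1 (by norm_num) (by norm_num [hI1]) (by rw [hA]; norm_num [hI1])
end
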